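/- For any LE-ALC ABox A, the tableaux algorithm applied to A terminates, and the number of expansion-rule applications (hence the running time) is polynomial in the size of A. -/
import Mathlib


/-!
Common formal infrastructure for the description logic LE-ALC:
syntax of concepts, individual names, ABox terms, the tableaux expansion
rules and completion, and the polarity-based (enriched formal context)
semantics.
-/

namespace LEALC

/-- LE-ALC concepts: `C ::= D | C₁ ∧ C₂ | C₁ ∨ C₂ | [R_□]C | ⟨R_◇⟩C`. -/
inductive Cpt : Type
  | atom : ℕ → Cpt
  | meet : Cpt → Cpt → Cpt
  | join : Cpt → Cpt → Cpt
  | box  : Cpt → Cpt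
  | dia  : Cpt → Cpt
  deriving DecidableEq

/-- Object individual names: ordinary names from `OBJ`, classifying objects
`a_C`, and the prefixed names `◇b`, `◆b` generated by the tableaux. -/
inductive ObName : Type
  | base : ℕ → ObName
  | cls  : Cpt → ObName
  | dia  : ObName → ObName
  | bdia : ObName → ObName
  deriving DecidableEq

/-- Feature individual names: ordinary names from `FEAT`, classifying features
`x_C`, and the prefixed names `□y`, `■y` generated by the tableaux. -/
inductive FtName : Type
  | base : ℕ → FtName
  | cls  : Cpt → FtName
  | box  : FtName → FtName
  | bbox : FtName → FtName
  deriving DecidableEq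

/-- `◇b`, with the identification `◇a_C = a_{◇C}`. -/
def ObName.diaS : ObName → ObName
  | .cls C => .cls (.dia C)
  | b => .dia b

/-- `□y`, with the identification `□x_C = x_{□C}`. -/
def FtName.boxS : FtName → FtName
  | .cls C => .cls (.box C)
  | y => .box y

/-- Positive (unnegated) ABox terms:
`a I x`, `a R_□ x`, `x R_◇ a`, `a : C`, `x :: C`. -/
inductive PTerm : Type
  | rI   : ObName → FtName → PTerm
  | rbox : ObName → FtName → PTerm
  | rdia : FtName → ObName → PTerm
  | mem  : ObName → Cpt → PTerm
  | fmem : FtName → Cpt → PTerm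
  deriving DecidableEq

/-- ABox terms: a positive term or its negation. -/
inductive Term : Type
  | pos : PTerm → Term
  | neg : PTerm → Term
  deriving DecidableEq

/-- The relational terms are `a I x`, `a R_□ x` and `x R_◇ a`. -/
def PTerm.IsRelational : PTerm → Prop
  | .rI _ _ => True
  | .rbox _ _ => True
  | .rdia _ _ => True
  | .mem _ _ => False
  | .fmem _ _ => False

/-- Subformulas (subconcepts) of a concept. -/
def Cpt.subs : Cpt → Finset Cpt
  | .atom n => {Cpt.atom n}
  | .meet C₁ C₂ => insert (Cpt.meet C₁ C₂) (C₁.subs ∪ C₂.subs)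
  | .join C₁ C₂ => insert (Cpt.join C₁ C₂) (C₁.subs ∪ C₂.subs)
  | .box C => insert (Cpt.box C) C.subs
  | .dia C => insert (Cpt.dia C) C.subs

/-- The concepts occurring in a term (subformulas of the concept of a
(possibly negated) membership assertion). -/
def Term.cpts : Term → Finset Cpt
  | .pos (.mem _ C) => C.subs
  | .pos (.fmem _ C) => C.subs
  | .neg (.mem _ C) => C.subs
  | .neg (.fmem _ C) => C.subs
  | _ => ∅

/-- The concept `C` occurs in the set of terms `A`. -/
def Occurs (C : Cpt) (A : Set Term) : Prop := ∃ t ∈ A, C ∈ t.cpts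

def PTerm.objs : PTerm → List ObName
  | .rI b _ => [b]
  | .rbox b _ => [b]
  | .rdia _ b => [b]
  | .mem b _ => [b]
  | .fmem _ _ => []

def PTerm.feats : PTerm → List FtName
  | .rI _ y => [y]
  | .rbox _ y => [y]
  | .rdia y _ => [y]
  | .mem _ _ => []
  | .fmem y _ => [y]

def Term.objs : Term → List ObName
  | .pos t => t.objs
  | .neg t => t.objs

def Term.feats : Term → List FtName
  | .pos t => t.feats
  | .neg t => t.feats

/-- The object name `b` occurs in the set of terms `S`. -/
def ObOccurs (b : ObName) (S : Set Term) : Prop := ∃ t ∈ S, b ∈ t.objs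

/-- The feature name `y` occurs in the set of terms `S`. -/
def FtOccurs (y : FtName) (S : Set Term) : Prop := ∃ t ∈ S, y ∈ t.feats

def ObName.IsBase (b : ObName) : Prop := ∃ n, b = ObName.base n
def FtName.IsBase (y : FtName) : Prop := ∃ n, y = FtName.base n

/-- A term all of whose individual names are ordinary (non-generated) names. -/
def Term.Plain (t : Term) : Prop :=
  (∀ b ∈ t.objs, b.IsBase) ∧ (∀ y ∈ t.feats, y.IsBase)

/-- An ABox is a set of terms over the ordinary individual names `OBJ`/`FEAT`
(the generated names `a_C`, `x_C`, `◇b`, `◆b`, `□y`, `■y` are fresh). -/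
def ABoxWF (A : Set Term) : Prop := ∀ t ∈ A, t.Plain

def Cpt.csize : Cpt → ℕ
  | .atom _ => 1
  | .meet C₁ C₂ => C₁.csize + C₂.csize + 1
  | .join C₁ C₂ => C₁.csize + C₂.csize + 1
  | .box C => C.csize + 1
  | .dia C => C.csize + 1

def PTerm.psize : PTerm → ℕ
  | .rI _ _ => 1
  | .rbox _ _ => 1
  | .rdia _ _ => 1
  | .mem _ C => C.csize + 1
  | .fmem _ C => C.csize + 1

def Term.tsize : Term → ℕ
  | .pos t => t.psize + 1
  | .neg t => t.psize + 2

/-- The size `|A|` of an ABox. -/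
def aboxSize (A : Finset Term) : ℕ := A.sum Term.tsize

/-- Box-depth of a concept. -/
def Cpt.bd : Cpt → ℕ
  | .atom _ => 0
  | .meet C₁ C₂ => max C₁.bd C₂.bd
  | .join C₁ C₂ => max C₁.bd C₂.bd
  | .box C => C.bd + 1
  | .dia C => C.bd

/-- Diamond-depth of a concept. -/
def Cpt.dd : Cpt → ℕ
  | .atom _ => 0
  | .meet C₁ C₂ => max C₁.dd C₂.dd
  | .join C₁ C₂ => max C₁.dd C₂.dd
  | .box C => C.dd
  | .dia C => C.dd + 1

/-- Box-depth of an object name (names in the input ABox have depth 0,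
prefixing changes the depth, classifying names inherit depths from their
concept). -/
def ObName.bd : ObName → ℤ
  | .base _ => 0
  | .cls C => -(C.bd : ℤ)
  | .dia b => b.bd
  | .bdia b => b.bd + 1

/-- Diamond-depth of an object name. -/
def ObName.dd : ObName → ℤ
  | .base _ => 0
  | .cls C => -(C.dd : ℤ)
  | .dia b => b.dd + 1
  | .bdia b => b.dd

/-- Box-depth of a feature name. -/
def FtName.bd : FtName → ℤ
  | .base _ => 0
  | .cls C => -(C.bd : ℤ)
  | .box y => y.bd + 1
  | .bbox y => y.bd

/-- Diamond-depth of a feature name. -/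
def FtName.dd : FtName → ℤ
  | .base _ => 0
  | .cls C => -(C.dd : ℤ)
  | .box y => y.dd
  | .bbox y => y.dd + 1

/-- All concepts occurring in an ABox. -/
def aboxCpts (A : Finset Term) : Finset Cpt := A.biUnion Term.cpts

/-- `□_D(A)`: maximal box-depth of a concept occurring in `A`. -/
def aboxBd (A : Finset Term) : ℕ := (aboxCpts A).sup Cpt.bd

/-- `◇_D(A)`: maximal diamond-depth of a concept occurring in `A`. -/
def aboxDd (A : Finset Term) : ℕ := (aboxCpts A).sup Cpt.dd

/-- One-step derivability: `Deriv E A S t` holds iff the term `t` can be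
added by applying one of the LE-ALC tableaux expansion rules (or the extra
rule `E`) to the current set of terms `S`, `A` being the input ABox (used
for the side conditions of the creation and inverse rules). -/
inductive Deriv (E : Term → Term → Prop) (A S : Set Term) : Term → Prop
  /-- creation rule -/
  | create_a {C : Cpt} : Occurs C A → Deriv E A S (.pos (.mem (.cls C) C))
  | create_x {C : Cpt} : Occurs C A → Deriv E A S (.pos (.fmem (.cls C) C))
  /-- basic rule -/
  | basic {b y C} : Term.pos (.mem b C) ∈ S → Term.pos (.fmem y C) ∈ S →
      Deriv E A S (.pos (.rI b y))
  /-- rules for the logical connectives -/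
  | andA_l {b C₁ C₂} : Term.pos (.mem b (.meet C₁ C₂)) ∈ S → Deriv E A S (.pos (.mem b C₁))
  | andA_r {b C₁ C₂} : Term.pos (.mem b (.meet C₁ C₂)) ∈ S → Deriv E A S (.pos (.mem b C₂))
  | orX_l {y C₁ C₂} : Term.pos (.fmem y (.join C₁ C₂)) ∈ S → Deriv E A S (.pos (.fmem y C₁))
  | orX_r {y C₁ C₂} : Term.pos (.fmem y (.join C₁ C₂)) ∈ S → Deriv E A S (.pos (.fmem y C₂))
  | boxR {b y C} : Term.pos (.mem b (.box C)) ∈ S → Term.pos (.fmem y C) ∈ S →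
      Deriv E A S (.pos (.rbox b y))
  | diaR {b y C} : Term.pos (.fmem y (.dia C)) ∈ S → Term.pos (.mem b C) ∈ S →
      Deriv E A S (.pos (.rdia y b))
  /-- inverse rules for the connectives -/
  | andA_inv {b C₁ C₂} : Term.pos (.mem b C₁) ∈ S → Term.pos (.mem b C₂) ∈ S →
      Occurs (.meet C₁ C₂) A → Deriv E A S (.pos (.mem b (.meet C₁ C₂)))
  | orX_inv {y C₁ C₂} : Term.pos (.fmem y C₁) ∈ S → Term.pos (.fmem y C₂) ∈ S →
      Occurs (.join C₁ C₂) A → Deriv E A S (.pos (.fmem y (.join C₁ C₂)))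
  /-- adjunction rules -/
  | adj_box_l {b y} : Term.pos (.rbox b y) ∈ S → Deriv E A S (.pos (.rI (.bdia b) y))
  | adj_box_r {b y} : Term.pos (.rbox b y) ∈ S → Deriv E A S (.pos (.rI b (FtName.boxS y)))
  | adj_dia_l {b y} : Term.pos (.rdia y b) ∈ S → Deriv E A S (.pos (.rI (ObName.diaS b) y))
  | adj_dia_r {b y} : Term.pos (.rdia y b) ∈ S → Deriv E A S (.pos (.rI b (.bbox y)))
  /-- I-compatibility rules -/
  | icomp_box {b y} : Term.pos (.rI b (FtName.boxS y)) ∈ S → Deriv E A S (.pos (.rbox b y))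
  | icomp_bbox {b y} : Term.pos (.rI b (.bbox y)) ∈ S → Deriv E A S (.pos (.rdia y b))
  | icomp_dia {b y} : Term.pos (.rI (ObName.diaS b) y) ∈ S → Deriv E A S (.pos (.rdia y b))
  | icomp_bdia {b y} : Term.pos (.rI (.bdia b) y) ∈ S → Deriv E A S (.pos (.rbox b y))
  /-- basic rules for negative assertions -/
  | neg_b {b C} : Term.neg (.mem b C) ∈ S → Deriv E A S (.neg (.rI b (.cls C)))
  | neg_x {y C} : Term.neg (.fmem y C) ∈ S → Deriv E A S (.neg (.rI (.cls C) y))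
  /-- appending rules -/
  | app_x {b C} : Term.pos (.rI b (.cls C)) ∈ S → Deriv E A S (.pos (.mem b C))
  | app_a {y C} : Term.pos (.rI (.cls C) y) ∈ S → Deriv E A S (.pos (.fmem y C))
  /-- an additional expansion rule `E` -/
  | extra {t t'} : E t t' → t ∈ S → Deriv E A S t'

/-- `S` contains `A` and is closed under the expansion rules. -/
def RuleClosed (E : Term → Term → Prop) (A S : Set Term) : Prop :=
  A ⊆ S ∧ ∀ t, Deriv E A S t → t ∈ S

/-- The tableaux completion `Ā` of the ABox `A` (w.r.t. the LE-ALC expansion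
rules together with the extra rule `E`): the least set of terms containing
`A` and closed under the rules. -/
def Compl (E : Term → Term → Prop) (A : Set Term) : Set Term :=
  {t | ∀ S : Set Term, RuleClosed E A S → t ∈ S}

/-- No extra expansion rule: the plain LE-ALC tableaux algorithm. -/
def noExt : Term → Term → Prop := fun _ _ => False

/-- One expansion step of the tableaux algorithm: a rule is applied to the
current set `B` and adds a new term. -/
def Step (E : Term → Term → Prop) (A B B' : Set Term) : Prop :=
  ∃ t, Deriv E A B t ∧ t ∉ B ∧ B' = insert t B

/-- A clash: some relational term occurs together with its negation. -/
def HasClash (S : Set Term) : Prop :=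
  ∃ β : PTerm, β.IsRelational ∧ Term.pos β ∈ S ∧ Term.neg β ∈ S

/-- The separation rule `SA(b,d)`: from `b I x` infer `d I x`. -/
def ruleSA (b d : ObName) : Term → Term → Prop :=
  fun t t' => ∃ x : FtName, t = Term.pos (.rI b x) ∧ t' = Term.pos (.rI d x)

/-- The separation rule `SX(y,z)`: from `a I y` infer `a I z`. -/
def ruleSX (y z : FtName) : Term → Term → Prop :=
  fun t t' => ∃ a : ObName, t = Term.pos (.rI a y) ∧ t' = Term.pos (.rI a z)

/-- The rule `SA(R_□,R_◇,b)`: from `b R_□ y` infer `y R_◇ b`. -/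
def ruleSAR (b : ObName) : Term → Term → Prop :=
  fun t t' => ∃ x : FtName, t = Term.pos (.rbox b x) ∧ t' = Term.pos (.rdia x b)

/-- The rule `SX(R_◇,R_□,y)`: from `y R_◇ a` infer `a R_□ y`. -/
def ruleSXR (y : FtName) : Term → Term → Prop :=
  fun t t' => ∃ a : ObName, t = Term.pos (.rdia y a) ∧ t' = Term.pos (.rbox a y)

/-! ## Semantics: enriched formal contexts -/

/-- `I^{(1)}[B]` -/
def gup {O F : Type} (I : O → F → Prop) (B : Set O) : Set F := {x | ∀ a ∈ B, I a x}

/-- `I^{(0)}[Y]` -/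
def gdn {O F : Type} (I : O → F → Prop) (Y : Set F) : Set O := {a | ∀ x ∈ Y, I a x}

/-- Galois-stability for sets of objects. -/
def StableO {O F : Type} (I : O → F → Prop) (B : Set O) : Prop := gdn I (gup I B) = B

/-- Galois-stability for sets of features. -/
def StableF {O F : Type} (I : O → F → Prop) (Y : Set F) : Prop := gup I (gdn I Y) = Y

/-- An interpretation of LE-ALC: an enriched formal context `(Ob, Ft, I, R_□, R_◇)`
together with interpretations of the individual names and of the atomic
concepts (an atomic concept is interpreted by the formal concept whose
extent is `vA n` and whose intent is `gup I (vA n)`). -/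
structure Model where
  Ob : Type
  Ft : Type
  I : Ob → Ft → Prop
  Rb : Ob → Ft → Prop
  Rd : Ft → Ob → Prop
  oi : ObName → Ob
  fi : FtName → Ft
  vA : ℕ → Set Ob

/-- Intent of the interpretation of an atomic concept. -/
def Model.vX (M : Model) (n : ℕ) : Set M.Ft := gup M.I (M.vA n)

/-- Well-formedness of an interpretation: `R_□` and `R_◇` are `I`-compatible,
and atomic concepts are interpreted by formal concepts. -/
def Model.Good (M : Model) : Prop :=
  (∀ x, StableO M.I {a | M.Rb a x}) ∧
  (∀ a, StableF M.I {x | M.Rb a x}) ∧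
  (∀ a, StableF M.I {x | M.Rd x a}) ∧
  (∀ x, StableO M.I {a | M.Rd x a}) ∧
  (∀ n, StableO M.I (M.vA n))

/-- The interpretation `C^M = (extent, intent)` of a concept. -/
def Model.ci (M : Model) : Cpt → Set M.Ob × Set M.Ft
  | .atom n => (M.vA n, M.vX n)
  | .meet C₁ C₂ =>
      ((Model.ci M C₁).1 ∩ (Model.ci M C₂).1,
        gup M.I ((Model.ci M C₁).1 ∩ (Model.ci M C₂).1))
  | .join C₁ C₂ =>
      (gdn M.I ((Model.ci M C₁).2 ∩ (Model.ci M C₂).2),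
        (Model.ci M C₁).2 ∩ (Model.ci M C₂).2)
  | .box C =>
      (gdn M.Rb (Model.ci M C).2, gup M.I (gdn M.Rb (Model.ci M C).2))
  | .dia C =>
      (gdn M.I (gup (fun a x => M.Rd x a) (Model.ci M C).1),
        gup (fun a x => M.Rd x a) (Model.ci M C).1)

/-- Satisfaction of positive ABox terms. -/
def Model.SatP (M : Model) : PTerm → Prop
  | .rI b y => M.I (M.oi b) (M.fi y)
  | .rbox b y => M.Rb (M.oi b) (M.fi y)
  | .rdia y b => M.Rd (M.fi y) (M.oi b)
  | .mem b C => M.oi b ∈ (Model.ci M C).1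
  | .fmem y C => M.fi y ∈ (Model.ci M C).2

/-- Satisfaction of ABox terms. -/
def Model.Sat (M : Model) : Term → Prop
  | .pos t => M.SatP t
  | .neg t => ¬ M.SatP t

/-- `M` is a model of the set of terms `A`. -/
def Model.SatAll (M : Model) (A : Set Term) : Prop := ∀ t ∈ A, M.Sat t

/-- An ABox is consistent iff it has a model. -/
def Consistent (A : Set Term) : Prop := ∃ M : Model, M.Good ∧ M.SatAll A

/-- `A ⊨ t`: every model of `A` satisfies `t`. -/
def Entails (A : Set Term) (t : Term) : Prop :=
  ∀ M : Model, M.Good → M.SatAll A → M.Sat t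

/-- `A ⊨ C₁ ⊑ C₂`: in every model of `A`, `C₁^M ≤ C₂^M` in the concept lattice. -/
def EntailsSub (A : Set Term) (C₁ C₂ : Cpt) : Prop :=
  ∀ M : Model, M.Good → M.SatAll A → (Model.ci M C₁).1 ⊆ (Model.ci M C₂).1

/-! ### Semantic concept operations -/

/-- The operation `[R_□]` on (extent, intent) pairs. -/
def Model.cbox (M : Model) (c : Set M.Ob × Set M.Ft) : Set M.Ob × Set M.Ft :=
  (gdn M.Rb c.2, gup M.I (gdn M.Rb c.2))

/-- The operation `⟨R_◇⟩` on (extent, intent) pairs. -/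
def Model.cdia (M : Model) (c : Set M.Ob × Set M.Ft) : Set M.Ob × Set M.Ft :=
  (gdn M.I (gup (fun a x => M.Rd x a) c.1), gup (fun a x => M.Rd x a) c.1)

/-- The operation `◆` (left adjoint of `[R_□]`). -/
def Model.cbdia (M : Model) (c : Set M.Ob × Set M.Ft) : Set M.Ob × Set M.Ft :=
  (gdn M.I (gup M.Rb c.1), gup M.Rb c.1)

/-- The operation `■` (right adjoint of `⟨R_◇⟩`). -/
def Model.cbbox (M : Model) (c : Set M.Ob × Set M.Ft) : Set M.Ob × Set M.Ft :=
  (gdn (fun a x => M.Rd x a) c.2, gup M.I (gdn (fun a x => M.Rd x a) c.2))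

/-- The concept `𝐚 = (a^{↑↓}, a^{↑})` generated by an object. -/
def Model.genO (M : Model) (a : M.Ob) : Set M.Ob × Set M.Ft :=
  (gdn M.I (gup M.I {a}), gup M.I {a})

/-- The concept `𝐱 = (x^{↓}, x^{↓↑})` generated by a feature. -/
def Model.genF (M : Model) (x : M.Ft) : Set M.Ob × Set M.Ft :=
  (gdn M.I {x}, gup M.I (gdn M.I {x}))

/-- The concept companion `con(b)` of an object name, interpreted in `M`. -/
def Model.conO (M : Model) : ObName → Set M.Ob × Set M.Ft
  | .base n => M.genO (M.oi (.base n))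
  | .cls C => M.genO (M.oi (.cls C))
  | .dia b => M.cdia (Model.conO M b)
  | .bdia b => M.cbdia (Model.conO M b)

/-- The concept companion `con(y)` of a feature name, interpreted in `M`. -/
def Model.conF (M : Model) : FtName → Set M.Ob × Set M.Ft
  | .base n => M.genF (M.fi (.base n))
  | .cls C => M.genF (M.fi (.cls C))
  | .box y => M.cbox (Model.conF M y)
  | .bbox y => M.cbbox (Model.conF M y)

/-! ### The canonical model built from the tableaux completion -/

/-- Classical `dite`. -/
noncomputable def cdite {α : Sort*} (p : Prop) (f : p → α) (g : ¬ p → α) : α :=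
  @dite α p (Classical.dec p) f g

/-- The canonical model built from the tableaux completion `Ā` of `A`:
its objects (resp. features) are the object (resp. feature) names occurring
in `Ā` (plus a dummy point interpreting the names not occurring in `Ā`),
every name occurring in `Ā` is interpreted by itself, the relations are read
off from `Ā`, and an atomic concept `D` is interpreted by the formal concept
`(x_D^↓, a_D^↑)`. -/
noncomputable def canModel (A : Finset Term) : Model where
  Ob := Option {b : ObName // ObOccurs b (Compl noExt ↑A)}
  Ft := Option {y : FtName // FtOccurs y (Compl noExt ↑A)}
  I := fun o x => ∃ b y, o = some b ∧ x = some y ∧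
        Term.pos (.rI b.1 y.1) ∈ Compl noExt ↑A
  Rb := fun o x => ∃ b y, o = some b ∧ x = some y ∧
        Term.pos (.rbox b.1 y.1) ∈ Compl noExt ↑A
  Rd := fun x o => ∃ b y, o = some b ∧ x = some y ∧
        Term.pos (.rdia y.1 b.1) ∈ Compl noExt ↑A
  oi := fun b => cdite (ObOccurs b (Compl noExt ↑A)) (fun h => some ⟨b, h⟩) (fun _ => none)
  fi := fun y => cdite (FtOccurs y (Compl noExt ↑A)) (fun h => some ⟨y, h⟩) (fun _ => none)
  vA := fun n => {o | ∃ b, o = some b ∧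
        Term.pos (.rI b.1 (.cls (.atom n))) ∈ Compl noExt ↑A}

/-! ### ◇-leading and □-leading concepts -/

/-- ◇-leading concepts. -/
inductive DiaLeading : Cpt → Prop
  | atom (n : ℕ) : DiaLeading (.dia (.atom n))
  | dia {C : Cpt} : DiaLeading C → DiaLeading (.dia C)
  | join {C : Cpt} (C₁ : Cpt) : DiaLeading C → DiaLeading (.join C C₁)
  | meet {C₁ C₂ : Cpt} : DiaLeading C₁ → DiaLeading C₂ → DiaLeading (.meet C₁ C₂)

/-- □-leading concepts. -/
inductive BoxLeading : Cpt → Prop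
  | atom (n : ℕ) : BoxLeading (.box (.atom n))
  | box {C : Cpt} : BoxLeading C → BoxLeading (.box C)
  | meet {C : Cpt} (C₁ : Cpt) : BoxLeading C → BoxLeading (.meet C C₁)
  | join {C₁ C₂ : Cpt} : BoxLeading C₁ → BoxLeading C₂ → BoxLeading (.join C₁ C₂)


/-! ### Auxiliary development for the termination theorem -/

/-- Iterated `box`. -/
def boxpow : ℕ → Cpt → Cpt
  | 0, C => C
  | m + 1, C => .box (boxpow m C)

/-- Iterated `dia`. -/
def diapow : ℕ → Cpt → Cpt
  | 0, C => C
  | m + 1, C => .dia (diapow m C)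

/-- Iterated `ObName.dia`. -/
def obDia : ℕ → ObName → ObName
  | 0, b => b
  | i + 1, b => .dia (obDia i b)

/-- Iterated `ObName.bdia`. -/
def obBdia : ℕ → ObName → ObName
  | 0, b => b
  | i + 1, b => .bdia (obBdia i b)

def ftBox : ℕ → FtName → FtName
  | 0, y => y
  | i + 1, y => .box (ftBox i y)

def ftBbox : ℕ → FtName → FtName
  | 0, y => y
  | i + 1, y => .bbox (ftBbox i y)

/-- "◇-led" concepts (closed under mem-style decomposition). -/
def DLc : Cpt → Prop
  | .atom _ => False
  | .meet C₁ C₂ => DLc C₁ ∧ DLc C₂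
  | .join C₁ C₂ => DLc C₁ ∨ DLc C₂
  | .box _ => False
  | .dia _ => True

/-- "□-led" concepts. -/
def BLc : Cpt → Prop
  | .atom _ => False
  | .meet C₁ C₂ => BLc C₁ ∨ BLc C₂
  | .join C₁ C₂ => BLc C₁ ∧ BLc C₂
  | .box _ => True
  | .dia _ => False

lemma DLc_BLc_false : ∀ C : Cpt, DLc C → BLc C → False := by
  intro C
  induction C with
  | atom n => intro h; exact h.elim
  | meet C₁ C₂ ih₁ ih₂ =>
      intro hd hb
      rcases hb with hb | hb
      · exact ih₁ hd.1 hb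
      · exact ih₂ hd.2 hb
  | join C₁ C₂ ih₁ ih₂ =>
      intro hd hb
      rcases hd with hd | hd
      · exact ih₁ hd hb.1
      · exact ih₂ hd hb.2
  | box C ih => intro h; exact h.elim
  | dia C ih => intro _ h; exact h.elim

/-- Scalar potential of a concept. -/
def hN (u v : ℤ) : Cpt → ℤ
  | .atom _ => 0
  | .meet C₁ C₂ => min (hN u v C₁) (hN u v C₂)
  | .join C₁ C₂ => max (hN u v C₁) (hN u v C₂)
  | .box C => hN u v C - u
  | .dia C => hN u v C + v

/-- Scalar potential of an object name. -/
def oV (u v β : ℤ) : ObName → ℤ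
  | .base _ => β
  | .cls C => hN u v C
  | .dia b => oV u v β b + v
  | .bdia b => oV u v β b + u

/-- Scalar potential of a feature name. -/
def fV (u v φ : ℤ) : FtName → ℤ
  | .base _ => φ
  | .cls C => hN u v C
  | .box y => fV u v φ y - u
  | .bbox y => fV u v φ y - v

/-- Satisfaction of a positive term in the scalar model. -/
def satM (u v β φ : ℤ) : PTerm → Prop
  | .rI b y => oV u v β b ≤ fV u v φ y
  | .rbox b y => oV u v β b + u ≤ fV u v φ y
  | .rdia y b => oV u v β b + v ≤ fV u v φ y
  | .mem b C => oV u v β b ≤ hN u v C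
  | .fmem y C => hN u v C ≤ fV u v φ y

/-- ◇-tainted object names. -/
def DTo : ObName → Prop
  | .base _ => False
  | .cls (Cpt.dia _) => True
  | .cls _ => False
  | .dia _ => True
  | .bdia b => DTo b

/-- □-tainted feature names. -/
def BTf : FtName → Prop
  | .base _ => False
  | .cls (Cpt.box _) => True
  | .cls _ => False
  | .box _ => True
  | .bbox y => BTf y

/-- ◇-clean object names (relative to `A`). -/
def NDia (A : Finset Term) : ObName → Prop
  | .base n => ObOccurs (.base n) ↑A
  | .cls E => E ∈ aboxCpts A ∧ BLc E
  | .dia _ => False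
  | .bdia b => NDia A b

/-- □-clean feature names. -/
def NBox (A : Finset Term) : FtName → Prop
  | .base n => FtOccurs (.base n) ↑A
  | .cls F => F ∈ aboxCpts A ∧ DLc F
  | .box _ => False
  | .bbox y => NBox A y

def famD (A : Finset Term) (C : Cpt) : Prop :=
  ∃ m C₀, C₀ ∈ aboxCpts A ∧ C = diapow m C₀

def famF (A : Finset Term) (C : Cpt) : Prop :=
  ∃ m C₀, C₀ ∈ aboxCpts A ∧ C = boxpow m C₀

/-- Well-formed object names. -/
def WFo (A : Finset Term) : ObName → Prop
  | .base n => ObOccurs (.base n) ↑A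
  | .cls E => famD A E
  | .dia b => WFo A b
  | .bdia b => NDia A b

/-- Well-formed feature names. -/
def WFf (A : Finset Term) : FtName → Prop
  | .base n => FtOccurs (.base n) ↑A
  | .cls F => famF A F
  | .box y => WFf A y
  | .bbox y => NBox A y

/-- Combinatorial invariant on positive terms. -/
def InvP (A : Finset Term) : PTerm → Prop
  | .rI b y => WFo A b ∧ WFf A y ∧ (BTf y → NDia A b) ∧ (DTo b → NBox A y) ∧
      (∀ F, y = .cls F → (DTo b → DLc F) ∧ (BLc F → NDia A b) ∧
        (∀ E, b = .cls E → (DLc E → DLc F) ∧ (BLc F → BLc E))) ∧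
      (∀ E, b = .cls E → (BTf y → BLc E) ∧ (DLc E → NBox A y))
  | .rbox b y => WFo A b ∧ WFf A y ∧ NDia A b
  | .rdia y b => WFo A b ∧ WFf A y ∧ NBox A y
  | .mem b C => WFo A b ∧ famF A C ∧ (DTo b → DLc C) ∧ (BLc C → NDia A b) ∧
      (∀ E, b = .cls E → (DLc E → DLc C) ∧ (BLc C → BLc E))
  | .fmem y C => WFf A y ∧ famD A C ∧ (BTf y → BLc C) ∧ (DLc C → NBox A y) ∧
      (∀ F, y = .cls F → (DLc C → DLc F) ∧ (BLc F → BLc C))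

def sat1 (A : Finset Term) (p : PTerm) : Prop :=
  satM 1 0 (-(aboxBd A : ℤ) - 1) 1 p

def sat3 (A : Finset Term) (p : PTerm) : Prop :=
  satM 0 1 (-1) ((aboxDd A : ℤ) + 2) p

/-- The full invariant on terms. -/
def Inv (A : Finset Term) : Term → Prop
  | .pos p => InvP A p ∧ sat1 A p ∧ sat3 A p
  | .neg p => Term.neg p ∈ A ∨
      (∃ b C, p = .rI b (.cls C) ∧ Term.neg (.mem b C) ∈ A) ∨
      (∃ y C, p = .rI (.cls C) y ∧ Term.neg (.fmem y C) ∈ A)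

/-! ### Basic lemmas -/

lemma subs_self : ∀ C : Cpt, C ∈ C.subs := by
  intro C; cases C <;> simp [Cpt.subs]

lemma subs_subset : ∀ {C D : Cpt}, D ∈ C.subs → D.subs ⊆ C.subs := by
  intro C
  induction C with
  | atom n => intro D hD; simp [Cpt.subs] at hD; subst hD; exact fun x hx => hx
  | meet C₁ C₂ ih₁ ih₂ =>
      intro D hD
      simp only [Cpt.subs, Finset.mem_insert, Finset.mem_union] at hD
      rcases hD with h | h | h
      · subst h; exact fun x hx => hx
      · exact fun x hx => by
          simp only [Cpt.subs, Finset.mem_insert, Finset.mem_union]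
          exact Or.inr (Or.inl (ih₁ h hx))
      · exact fun x hx => by
          simp only [Cpt.subs, Finset.mem_insert, Finset.mem_union]
          exact Or.inr (Or.inr (ih₂ h hx))
  | join C₁ C₂ ih₁ ih₂ =>
      intro D hD
      simp only [Cpt.subs, Finset.mem_insert, Finset.mem_union] at hD
      rcases hD with h | h | h
      · subst h; exact fun x hx => hx
      · exact fun x hx => by
          simp only [Cpt.subs, Finset.mem_insert, Finset.mem_union]
          exact Or.inr (Or.inl (ih₁ h hx))
      · exact fun x hx => by
          simp only [Cpt.subs, Finset.mem_insert, Finset.mem_union]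
          exact Or.inr (Or.inr (ih₂ h hx))
  | box C ih =>
      intro D hD
      simp only [Cpt.subs, Finset.mem_insert] at hD
      rcases hD with h | h
      · subst h; exact fun x hx => hx
      · exact fun x hx => by
          simp only [Cpt.subs, Finset.mem_insert]
          exact Or.inr (ih h hx)
  | dia C ih =>
      intro D hD
      simp only [Cpt.subs, Finset.mem_insert] at hD
      rcases hD with h | h
      · subst h; exact fun x hx => hx
      · exact fun x hx => by
          simp only [Cpt.subs, Finset.mem_insert]
          exact Or.inr (ih h hx)

lemma occurs_iff {A : Finset Term} {C : Cpt} :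
    Occurs C ↑A ↔ C ∈ aboxCpts A := by
  simp [Occurs, aboxCpts, Finset.mem_biUnion]

lemma aboxCpts_subclosed {A : Finset Term} {C D : Cpt}
    (hC : C ∈ aboxCpts A) (hD : D ∈ C.subs) : D ∈ aboxCpts A := by
  rw [aboxCpts, Finset.mem_biUnion] at hC ⊢
  obtain ⟨t, ht, hCt⟩ := hC
  refine ⟨t, ht, ?_⟩
  cases t with
  | pos p =>
      cases p <;> simp [Term.cpts] at hCt ⊢ <;> exact subs_subset hCt hD
  | neg p =>
      cases p <;> simp [Term.cpts] at hCt ⊢ <;> exact subs_subset hCt hD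

lemma bd_le_aboxBd {A : Finset Term} {C : Cpt} (h : C ∈ aboxCpts A) :
    C.bd ≤ aboxBd A := Finset.le_sup h

lemma dd_le_aboxDd {A : Finset Term} {C : Cpt} (h : C ∈ aboxCpts A) :
    C.dd ≤ aboxDd A := Finset.le_sup h

lemma hN1_le_zero : ∀ C : Cpt, hN 1 0 C ≤ 0 := by
  intro C
  induction C with
  | atom n => simp [hN]
  | meet C₁ C₂ ih₁ ih₂ => simp [hN]; omega
  | join C₁ C₂ ih₁ ih₂ => simp [hN]; omega
  | box C ih => simp [hN]; omega
  | dia C ih => simpa [hN] using ih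

lemma hN1_ge : ∀ C : Cpt, -(C.bd : ℤ) ≤ hN 1 0 C := by
  intro C
  induction C with
  | atom n => simp [hN, Cpt.bd]
  | meet C₁ C₂ ih₁ ih₂ => simp [hN, Cpt.bd]; push_cast; omega
  | join C₁ C₂ ih₁ ih₂ => simp [hN, Cpt.bd]; push_cast; omega
  | box C ih => simp [hN, Cpt.bd]; push_cast; omega
  | dia C ih => simpa [hN, Cpt.bd] using ih

lemma hN3_nonneg : ∀ C : Cpt, 0 ≤ hN 0 1 C := by
  intro C
  induction C with
  | atom n => simp [hN]
  | meet C₁ C₂ ih₁ ih₂ => simp [hN]; omega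
  | join C₁ C₂ ih₁ ih₂ => simp [hN]; omega
  | box C ih => simpa [hN] using ih
  | dia C ih => simp [hN]; omega

lemma hN3_le : ∀ C : Cpt, hN 0 1 C ≤ (C.dd : ℤ) := by
  intro C
  induction C with
  | atom n => simp [hN, Cpt.dd]
  | meet C₁ C₂ ih₁ ih₂ => simp [hN, Cpt.dd]; push_cast; omega
  | join C₁ C₂ ih₁ ih₂ => simp [hN, Cpt.dd]; push_cast; omega
  | box C ih => simpa [hN, Cpt.dd] using ih
  | dia C ih => simp [hN, Cpt.dd]; push_cast; omega

lemma fV_boxS (u v φ : ℤ) (y : FtName) :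
    fV u v φ (FtName.boxS y) = fV u v φ y - u := by
  cases y <;> simp [FtName.boxS, fV, hN]

lemma oV_diaS (u v β : ℤ) (b : ObName) :
    oV u v β (ObName.diaS b) = oV u v β b + v := by
  cases b <;> simp [ObName.diaS, oV, hN]

lemma BTf_boxS (y : FtName) : BTf (FtName.boxS y) := by
  cases y <;> simp [FtName.boxS, BTf]

lemma DTo_diaS (b : ObName) : DTo (ObName.diaS b) := by
  cases b <;> simp [ObName.diaS, DTo]

lemma NDia_not_DTo {A : Finset Term} : ∀ {b : ObName}, NDia A b → ¬ DTo b := by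
  intro b
  induction b with
  | base n => intro _ h; exact h
  | cls E =>
      intro hN hD
      cases E <;> simp [DTo] at hD
      exact (show ¬ BLc (Cpt.dia _) from fun h => h) hN.2
  | dia b ih => intro h; exact h.elim
  | bdia b ih => exact fun h => ih h

lemma NBox_not_BTf {A : Finset Term} : ∀ {y : FtName}, NBox A y → ¬ BTf y := by
  intro y
  induction y with
  | base n => intro _ h; exact h
  | cls F =>
      intro hN hB
      cases F <;> simp [BTf] at hB
      exact (show ¬ DLc (Cpt.box _) from fun h => h) hN.2
  | box y ih => intro h; exact h.elim
  | bbox y ih => exact fun h => ih h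

lemma NDia_WFo {A : Finset Term} : ∀ {b : ObName}, NDia A b → WFo A b := by
  intro b
  induction b with
  | base n => exact fun h => h
  | cls E => exact fun h => ⟨0, E, h.1, rfl⟩
  | dia b ih => intro h; exact h.elim
  | bdia b ih => exact fun h => h

lemma NBox_WFf {A : Finset Term} : ∀ {y : FtName}, NBox A y → WFf A y := by
  intro y
  induction y with
  | base n => exact fun h => h
  | cls F => exact fun h => ⟨0, F, h.1, rfl⟩
  | box y ih => intro h; exact h.elim
  | bbox y ih => exact fun h => h

lemma famF_boxS {A : Finset Term} {C : Cpt} (h : famF A C) :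
    famF A (Cpt.box C) := by
  obtain ⟨m, C₀, h₀, rfl⟩ := h
  exact ⟨m + 1, C₀, h₀, rfl⟩

lemma famD_diaS {A : Finset Term} {C : Cpt} (h : famD A C) :
    famD A (Cpt.dia C) := by
  obtain ⟨m, C₀, h₀, rfl⟩ := h
  exact ⟨m + 1, C₀, h₀, rfl⟩

lemma famF_of_box {A : Finset Term} {C : Cpt} (h : famF A (Cpt.box C)) :
    famF A C := by
  obtain ⟨m, C₀, h₀, hEq⟩ := h
  cases m with
  | zero =>
      refine ⟨0, C, ?_, rfl⟩
      refine aboxCpts_subclosed h₀ ?_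
      rw [show C₀ = Cpt.box C from hEq.symm]
      simp [Cpt.subs, subs_self]
  | succ m =>
      refine ⟨m, C₀, h₀, ?_⟩
      simpa [boxpow] using hEq

lemma famD_of_dia {A : Finset Term} {C : Cpt} (h : famD A (Cpt.dia C)) :
    famD A C := by
  obtain ⟨m, C₀, h₀, hEq⟩ := h
  cases m with
  | zero =>
      refine ⟨0, C, ?_, rfl⟩
      refine aboxCpts_subclosed h₀ ?_
      rw [show C₀ = Cpt.dia C from hEq.symm]
      simp [Cpt.subs, subs_self]
  | succ m =>
      refine ⟨m, C₀, h₀, ?_⟩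
      simpa [diapow] using hEq

lemma WFf_boxS {A : Finset Term} {y : FtName} (h : WFf A y) :
    WFf A (FtName.boxS y) := by
  cases y with
  | cls F => exact famF_boxS h
  | base n => exact h
  | box y => exact h
  | bbox y => exact h

lemma WFo_diaS {A : Finset Term} {b : ObName} (h : WFo A b) :
    WFo A (ObName.diaS b) := by
  cases b with
  | cls E => exact famD_diaS h
  | base n => exact h
  | dia b => exact h
  | bdia b => exact h

lemma WFf_of_boxS {A : Finset Term} {y : FtName} (h : WFf A (FtName.boxS y)) :
    WFf A y := by
  cases y with
  | cls F => exact famF_of_box h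
  | base n => exact h
  | box y => exact h
  | bbox y => exact h

lemma WFo_of_diaS {A : Finset Term} {b : ObName} (h : WFo A (ObName.diaS b)) :
    WFo A b := by
  cases b with
  | cls E => exact famD_of_dia h
  | base n => exact h
  | dia b => exact h
  | bdia b => exact h


lemma famF_meet {A : Finset Term} {C₁ C₂ : Cpt} (h : famF A (Cpt.meet C₁ C₂)) :
    C₁ ∈ aboxCpts A ∧ C₂ ∈ aboxCpts A := by
  obtain ⟨m, C₀, h₀, hEq⟩ := h
  cases m with
  | zero =>
      have : C₀ = Cpt.meet C₁ C₂ := hEq.symm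
      subst this
      constructor
      · exact aboxCpts_subclosed h₀ (by simp [Cpt.subs, subs_self])
      · exact aboxCpts_subclosed h₀ (by simp [Cpt.subs, subs_self])
  | succ m => simp [boxpow] at hEq

lemma famD_join {A : Finset Term} {C₁ C₂ : Cpt} (h : famD A (Cpt.join C₁ C₂)) :
    C₁ ∈ aboxCpts A ∧ C₂ ∈ aboxCpts A := by
  obtain ⟨m, C₀, h₀, hEq⟩ := h
  cases m with
  | zero =>
      have : C₀ = Cpt.join C₁ C₂ := hEq.symm
      subst this
      constructor
      · exact aboxCpts_subclosed h₀ (by simp [Cpt.subs, subs_self])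
      · exact aboxCpts_subclosed h₀ (by simp [Cpt.subs, subs_self])
  | succ m => simp [diapow] at hEq

/-- The invariant set is closed under the tableaux rules. -/
theorem inv_closed (A : Finset Term) (hWF : ABoxWF ↑A) :
    RuleClosed noExt ↑A {t | Inv A t} := by
  constructor
  · -- A ⊆ Inv
    intro t ht
    obtain ⟨hobj, hfeat⟩ := hWF t ht
    show Inv A t
    cases t with
    | neg p => exact Or.inl ht
    | pos p =>
      have hcpt : ∀ C ∈ (Term.pos p).cpts, C ∈ aboxCpts A := by
        intro C hC
        exact Finset.mem_biUnion.mpr ⟨_, ht, hC⟩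
      cases p with
      | mem b C =>
          obtain ⟨n, rfl⟩ := hobj b (by simp [Term.objs, PTerm.objs])
          have hC : C ∈ aboxCpts A :=
            hcpt C (by simp [Term.cpts]; exact subs_self C)
          have hocc : ObOccurs (ObName.base n) ↑A :=
            ⟨_, ht, by simp [Term.objs, PTerm.objs]⟩
          refine ⟨⟨hocc, ⟨0, C, hC, rfl⟩, fun h => h.elim, fun _ => hocc,
            ?_⟩, ?_, ?_⟩
          · intro E hE; cases hE
          · show -(aboxBd A : ℤ) - 1 ≤ hN 1 0 C
            have h1 := hN1_ge C
            have h2 : C.bd ≤ aboxBd A := bd_le_aboxBd hC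
            omega
          · show (-1 : ℤ) ≤ hN 0 1 C
            have := hN3_nonneg C
            omega
      | fmem y C =>
          obtain ⟨n, rfl⟩ := hfeat y (by simp [Term.feats, PTerm.feats])
          have hC : C ∈ aboxCpts A :=
            hcpt C (by simp [Term.cpts]; exact subs_self C)
          have hocc : FtOccurs (FtName.base n) ↑A :=
            ⟨_, ht, by simp [Term.feats, PTerm.feats]⟩
          refine ⟨⟨hocc, ⟨0, C, hC, rfl⟩, fun h => h.elim, fun _ => hocc,
            ?_⟩, ?_, ?_⟩
          · intro F hF; cases hF
          · show hN 1 0 C ≤ 1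
            have := hN1_le_zero C
            omega
          · show hN 0 1 C ≤ (aboxDd A : ℤ) + 2
            have h1 := hN3_le C
            have h2 : C.dd ≤ aboxDd A := dd_le_aboxDd hC
            omega
      | rI b y =>
          obtain ⟨n, rfl⟩ := hobj b (by simp [Term.objs, PTerm.objs])
          obtain ⟨n', rfl⟩ := hfeat y (by simp [Term.feats, PTerm.feats])
          have hocc : ObOccurs (ObName.base n) ↑A :=
            ⟨_, ht, by simp [Term.objs, PTerm.objs]⟩
          have hocc' : FtOccurs (FtName.base n') ↑A :=
            ⟨_, ht, by simp [Term.feats, PTerm.feats]⟩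
          refine ⟨⟨hocc, hocc', fun h => h.elim, fun h => h.elim,
            ?_, ?_⟩, ?_, ?_⟩
          · intro F hF; cases hF
          · intro E hE; cases hE
          · show -(aboxBd A : ℤ) - 1 ≤ 1
            omega
          · show (-1 : ℤ) ≤ (aboxDd A : ℤ) + 2
            omega
      | rbox b y =>
          obtain ⟨n, rfl⟩ := hobj b (by simp [Term.objs, PTerm.objs])
          obtain ⟨n', rfl⟩ := hfeat y (by simp [Term.feats, PTerm.feats])
          have hocc : ObOccurs (ObName.base n) ↑A :=
            ⟨_, ht, by simp [Term.objs, PTerm.objs]⟩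
          have hocc' : FtOccurs (FtName.base n') ↑A :=
            ⟨_, ht, by simp [Term.feats, PTerm.feats]⟩
          refine ⟨⟨hocc, hocc', hocc⟩, ?_, ?_⟩
          · show -(aboxBd A : ℤ) - 1 + 1 ≤ 1
            omega
          · show (-1 : ℤ) + 0 ≤ (aboxDd A : ℤ) + 2
            omega
      | rdia y b =>
          obtain ⟨n, rfl⟩ := hobj b (by simp [Term.objs, PTerm.objs])
          obtain ⟨n', rfl⟩ := hfeat y (by simp [Term.feats, PTerm.feats])
          have hocc : ObOccurs (ObName.base n) ↑A :=
            ⟨_, ht, by simp [Term.objs, PTerm.objs]⟩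
          have hocc' : FtOccurs (FtName.base n') ↑A :=
            ⟨_, ht, by simp [Term.feats, PTerm.feats]⟩
          refine ⟨⟨hocc, hocc', hocc'⟩, ?_, ?_⟩
          · show -(aboxBd A : ℤ) - 1 + 0 ≤ 1
            omega
          · show (-1 : ℤ) + 1 ≤ (aboxDd A : ℤ) + 2
            omega
  · -- closure
    intro t hd
    cases hd with
    | @create_a C hOcc =>
        have hC : C ∈ aboxCpts A := occurs_iff.mp hOcc
        refine ⟨⟨⟨0, C, hC, rfl⟩, ⟨0, C, hC, rfl⟩, ?_, fun h => ⟨hC, h⟩,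
          ?_⟩, ?_, ?_⟩
        · intro h; cases C <;> simp_all [DTo, DLc]
        · intro E hE
          injection hE with h
          subst h
          exact ⟨id, id⟩
        · show hN 1 0 C ≤ hN 1 0 C; exact le_refl _
        · show hN 0 1 C ≤ hN 0 1 C; exact le_refl _
    | @create_x C hOcc =>
        have hC : C ∈ aboxCpts A := occurs_iff.mp hOcc
        refine ⟨⟨⟨0, C, hC, rfl⟩, ⟨0, C, hC, rfl⟩, ?_, fun h => ⟨hC, h⟩,
          ?_⟩, ?_, ?_⟩
        · intro h; cases C <;> simp_all [BTf, BLc]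
        · intro F hF
          injection hF with h
          subst h
          exact ⟨id, id⟩
        · show hN 1 0 C ≤ hN 1 0 C; exact le_refl _
        · show hN 0 1 C ≤ hN 0 1 C; exact le_refl _
    | @basic b y C h1 h2 =>
        obtain ⟨⟨hw1, hf1, hdt1, hbl1, hcls1⟩, hs11, hs13⟩ := h1
        obtain ⟨⟨hw2, hf2, hbt2, hdl2, hcls2⟩, hs21, hs23⟩ := h2
        refine ⟨⟨hw1, hw2, fun hb => hbl1 (hbt2 hb), fun hd => hdl2 (hdt1 hd),
          ?_, ?_⟩, ?_, ?_⟩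
        · rintro F rfl
          refine ⟨fun hd => (hcls2 F rfl).1 (hdt1 hd),
            fun hb => hbl1 ((hcls2 F rfl).2 hb), ?_⟩
          rintro E rfl
          exact ⟨fun h => (hcls2 F rfl).1 ((hcls1 E rfl).1 h),
            fun h => (hcls1 E rfl).2 ((hcls2 F rfl).2 h)⟩
        · rintro E rfl
          exact ⟨fun h => (hcls1 E rfl).2 (hbt2 h),
            fun h => hdl2 ((hcls1 E rfl).1 h)⟩
        · exact le_trans hs11 hs21
        · exact le_trans hs13 hs23
    | @andA_l b C₁ C₂ h1 =>
        obtain ⟨⟨hw, hf, hdt, hbl, hcls⟩, hs1, hs3⟩ := h1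
        have hCC := famF_meet hf
        refine ⟨⟨hw, ⟨0, C₁, hCC.1, rfl⟩, fun h => (hdt h).1,
          fun h => hbl (Or.inl h), ?_⟩, ?_, ?_⟩
        · rintro E rfl
          exact ⟨fun h => ((hcls E rfl).1 h).1, fun h => (hcls E rfl).2 (Or.inl h)⟩
        · exact le_trans hs1 (min_le_left _ _)
        · exact le_trans hs3 (min_le_left _ _)
    | @andA_r b C₁ C₂ h1 =>
        obtain ⟨⟨hw, hf, hdt, hbl, hcls⟩, hs1, hs3⟩ := h1
        have hCC := famF_meet hf
        refine ⟨⟨hw, ⟨0, C₂, hCC.2, rfl⟩, fun h => (hdt h).2,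
          fun h => hbl (Or.inr h), ?_⟩, ?_, ?_⟩
        · rintro E rfl
          exact ⟨fun h => ((hcls E rfl).1 h).2, fun h => (hcls E rfl).2 (Or.inr h)⟩
        · exact le_trans hs1 (min_le_right _ _)
        · exact le_trans hs3 (min_le_right _ _)
    | @orX_l y C₁ C₂ h1 =>
        obtain ⟨⟨hw, hf, hbt, hdl, hcls⟩, hs1, hs3⟩ := h1
        have hCC := famD_join hf
        refine ⟨⟨hw, ⟨0, C₁, hCC.1, rfl⟩, fun h => (hbt h).1,
          fun h => hdl (Or.inl h), ?_⟩, ?_, ?_⟩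
        · rintro F rfl
          exact ⟨fun h => (hcls F rfl).1 (Or.inl h), fun h => ((hcls F rfl).2 h).1⟩
        · exact le_trans (le_max_left _ _) hs1
        · exact le_trans (le_max_left _ _) hs3
    | @orX_r y C₁ C₂ h1 =>
        obtain ⟨⟨hw, hf, hbt, hdl, hcls⟩, hs1, hs3⟩ := h1
        have hCC := famD_join hf
        refine ⟨⟨hw, ⟨0, C₂, hCC.2, rfl⟩, fun h => (hbt h).2,
          fun h => hdl (Or.inr h), ?_⟩, ?_, ?_⟩
        · rintro F rfl
          exact ⟨fun h => (hcls F rfl).1 (Or.inr h), fun h => ((hcls F rfl).2 h).2⟩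
        · exact le_trans (le_max_right _ _) hs1
        · exact le_trans (le_max_right _ _) hs3
    | @boxR b y C h1 h2 =>
        obtain ⟨⟨hw1, hf1, hdt1, hbl1, hcls1⟩, hs11, hs13⟩ := h1
        obtain ⟨⟨hw2, hf2, hbt2, hdl2, hcls2⟩, hs21, hs23⟩ := h2
        refine ⟨⟨hw1, hw2, hbl1 trivial⟩, ?_, ?_⟩
        · have e1 : hN 1 0 (Cpt.box C) = hN 1 0 C - 1 := by simp [hN]
          show oV 1 0 (-(aboxBd A : ℤ) - 1) b + 1 ≤ fV 1 0 1 y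
          have h1' : oV 1 0 (-(aboxBd A : ℤ) - 1) b ≤ hN 1 0 C - 1 := e1 ▸ hs11
          have h2' : hN 1 0 C ≤ fV 1 0 1 y := hs21
          omega
        · have e1 : hN 0 1 (Cpt.box C) = hN 0 1 C := by simp [hN]
          show oV 0 1 (-1) b + 0 ≤ fV 0 1 ((aboxDd A : ℤ) + 2) y
          have h1' : oV 0 1 (-1) b ≤ hN 0 1 C := e1 ▸ hs13
          have h2' : hN 0 1 C ≤ fV 0 1 ((aboxDd A : ℤ) + 2) y := hs23
          omega
    | @diaR b y C h1 h2 =>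
        obtain ⟨⟨hw1, hf1, hbt1, hdl1, hcls1⟩, hs11, hs13⟩ := h1
        obtain ⟨⟨hw2, hf2, hdt2, hbl2, hcls2⟩, hs21, hs23⟩ := h2
        refine ⟨⟨hw2, hw1, hdl1 trivial⟩, ?_, ?_⟩
        · have e1 : hN 1 0 (Cpt.dia C) = hN 1 0 C := by simp [hN]
          show oV 1 0 (-(aboxBd A : ℤ) - 1) b + 0 ≤ fV 1 0 1 y
          have h1' : hN 1 0 C ≤ fV 1 0 1 y := e1 ▸ hs11
          have h2' : oV 1 0 (-(aboxBd A : ℤ) - 1) b ≤ hN 1 0 C := hs21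
          omega
        · have e1 : hN 0 1 (Cpt.dia C) = hN 0 1 C + 1 := by simp [hN]
          show oV 0 1 (-1) b + 1 ≤ fV 0 1 ((aboxDd A : ℤ) + 2) y
          have h1' : hN 0 1 C + 1 ≤ fV 0 1 ((aboxDd A : ℤ) + 2) y := e1 ▸ hs13
          have h2' : oV 0 1 (-1) b ≤ hN 0 1 C := hs23
          omega
    | @andA_inv b C₁ C₂ h1 h2 hOcc =>
        obtain ⟨⟨hw1, hf1, hdt1, hbl1, hcls1⟩, hs11, hs13⟩ := h1
        obtain ⟨⟨hw2, hf2, hdt2, hbl2, hcls2⟩, hs21, hs23⟩ := h2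
        refine ⟨⟨hw1, ⟨0, _, occurs_iff.mp hOcc, rfl⟩,
          fun h => ⟨hdt1 h, hdt2 h⟩,
          fun h => h.elim (fun h => hbl1 h) (fun h => hbl2 h), ?_⟩, ?_, ?_⟩
        · rintro E rfl
          exact ⟨fun h => ⟨(hcls1 E rfl).1 h, (hcls2 E rfl).1 h⟩,
            fun h => h.elim (fun h => (hcls1 E rfl).2 h)
              (fun h => (hcls2 E rfl).2 h)⟩
        · exact le_min hs11 hs21
        · exact le_min hs13 hs23
    | @orX_inv y C₁ C₂ h1 h2 hOcc =>
        obtain ⟨⟨hw1, hf1, hbt1, hdl1, hcls1⟩, hs11, hs13⟩ := h1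
        obtain ⟨⟨hw2, hf2, hbt2, hdl2, hcls2⟩, hs21, hs23⟩ := h2
        refine ⟨⟨hw1, ⟨0, _, occurs_iff.mp hOcc, rfl⟩,
          fun h => ⟨hbt1 h, hbt2 h⟩,
          fun h => h.elim (fun h => hdl1 h) (fun h => hdl2 h), ?_⟩, ?_, ?_⟩
        · rintro F rfl
          exact ⟨fun h => h.elim (fun h => (hcls1 F rfl).1 h)
              (fun h => (hcls2 F rfl).1 h),
            fun h => ⟨(hcls1 F rfl).2 h, (hcls2 F rfl).2 h⟩⟩
        · exact max_le hs11 hs21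
        · exact max_le hs13 hs23
    | @adj_box_l b y h1 =>
        obtain ⟨⟨hwo, hwf, hnd⟩, hs1, hs3⟩ := h1
        refine ⟨⟨hnd, hwf, fun _ => hnd, fun h => absurd h (NDia_not_DTo hnd),
          ?_, ?_⟩, ?_, ?_⟩
        · rintro F rfl
          refine ⟨fun h => absurd h (NDia_not_DTo hnd), fun _ => hnd, ?_⟩
          intro E hE; cases hE
        · intro E hE; cases hE
        · show oV 1 0 (-(aboxBd A : ℤ) - 1) b + 1 ≤ fV 1 0 1 y
          exact hs1
        · show oV 0 1 (-1) b + 0 ≤ fV 0 1 ((aboxDd A : ℤ) + 2) y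
          exact hs3
    | @adj_box_r b y h1 =>
        obtain ⟨⟨hwo, hwf, hnd⟩, hs1, hs3⟩ := h1
        refine ⟨⟨hwo, WFf_boxS hwf, fun _ => hnd,
          fun h => absurd h (NDia_not_DTo hnd), ?_, ?_⟩, ?_, ?_⟩
        · intro F hF
          cases y with
          | cls F₀ =>
              cases hF
              refine ⟨fun h => absurd h (NDia_not_DTo hnd), fun _ => hnd, ?_⟩
              rintro E rfl
              exact ⟨fun h => (DLc_BLc_false E h hnd.2).elim, fun _ => hnd.2⟩
          | base n => cases hF
          | box y => cases hF
          | bbox y => cases hF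
        · rintro E rfl
          exact ⟨fun _ => hnd.2, fun h => (DLc_BLc_false E h hnd.2).elim⟩
        · show oV 1 0 (-(aboxBd A : ℤ) - 1) b ≤ fV 1 0 1 (FtName.boxS y)
          rw [fV_boxS]
          have : oV 1 0 (-(aboxBd A : ℤ) - 1) b + 1 ≤ fV 1 0 1 y := hs1
          omega
        · show oV 0 1 (-1) b ≤ fV 0 1 ((aboxDd A : ℤ) + 2) (FtName.boxS y)
          rw [fV_boxS]
          have : oV 0 1 (-1) b + 0 ≤ fV 0 1 ((aboxDd A : ℤ) + 2) y := hs3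
          omega
    | @adj_dia_l b y h1 =>
        obtain ⟨⟨hwo, hwf, hnb⟩, hs1, hs3⟩ := h1
        refine ⟨⟨WFo_diaS hwo, hwf, fun h => absurd h (NBox_not_BTf hnb),
          fun _ => hnb, ?_, ?_⟩, ?_, ?_⟩
        · rintro F rfl
          refine ⟨fun _ => hnb.2, fun hB => (DLc_BLc_false F hnb.2 hB).elim, ?_⟩
          intro E hE
          exact ⟨fun _ => hnb.2, fun hB => (DLc_BLc_false F hnb.2 hB).elim⟩
        · intro E hE
          exact ⟨fun h => absurd h (NBox_not_BTf hnb), fun _ => hnb⟩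
        · show oV 1 0 (-(aboxBd A : ℤ) - 1) (ObName.diaS b) ≤ fV 1 0 1 y
          rw [oV_diaS]
          have : oV 1 0 (-(aboxBd A : ℤ) - 1) b + 0 ≤ fV 1 0 1 y := hs1
          omega
        · show oV 0 1 (-1) (ObName.diaS b) ≤ fV 0 1 ((aboxDd A : ℤ) + 2) y
          rw [oV_diaS]
          have : oV 0 1 (-1) b + 1 ≤ fV 0 1 ((aboxDd A : ℤ) + 2) y := hs3
          omega
    | @adj_dia_r b y h1 =>
        obtain ⟨⟨hwo, hwf, hnb⟩, hs1, hs3⟩ := h1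
        refine ⟨⟨hwo, hnb, fun h => absurd h (NBox_not_BTf hnb),
          fun _ => hnb, ?_, ?_⟩, ?_, ?_⟩
        · intro F hF; cases hF
        · intro E hE
          exact ⟨fun h => absurd h (NBox_not_BTf hnb), fun _ => hnb⟩
        · show oV 1 0 (-(aboxBd A : ℤ) - 1) b ≤ fV 1 0 1 y - 0
          have : oV 1 0 (-(aboxBd A : ℤ) - 1) b + 0 ≤ fV 1 0 1 y := hs1
          omega
        · show oV 0 1 (-1) b ≤ fV 0 1 ((aboxDd A : ℤ) + 2) y - 1
          have : oV 0 1 (-1) b + 1 ≤ fV 0 1 ((aboxDd A : ℤ) + 2) y := hs3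
          omega
    | @icomp_box b y h1 =>
        obtain ⟨⟨hwo, hwf, hbt, hdto, hclsF, hclsE⟩, hs1, hs3⟩ := h1
        refine ⟨⟨hwo, WFf_of_boxS hwf, hbt (BTf_boxS y)⟩, ?_, ?_⟩
        · show oV 1 0 (-(aboxBd A : ℤ) - 1) b + 1 ≤ fV 1 0 1 y
          have : oV 1 0 (-(aboxBd A : ℤ) - 1) b ≤ fV 1 0 1 (FtName.boxS y) := hs1
          rw [fV_boxS] at this
          omega
        · show oV 0 1 (-1) b + 0 ≤ fV 0 1 ((aboxDd A : ℤ) + 2) y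
          have : oV 0 1 (-1) b ≤ fV 0 1 ((aboxDd A : ℤ) + 2) (FtName.boxS y) := hs3
          rw [fV_boxS] at this
          omega
    | @icomp_bbox b y h1 =>
        obtain ⟨⟨hwo, hwf, hbt, hdto, hclsF, hclsE⟩, hs1, hs3⟩ := h1
        refine ⟨⟨hwo, NBox_WFf hwf, hwf⟩, ?_, ?_⟩
        · show oV 1 0 (-(aboxBd A : ℤ) - 1) b + 0 ≤ fV 1 0 1 y
          have : oV 1 0 (-(aboxBd A : ℤ) - 1) b ≤ fV 1 0 1 y - 0 := hs1
          omega
        · show oV 0 1 (-1) b + 1 ≤ fV 0 1 ((aboxDd A : ℤ) + 2) y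
          have : oV 0 1 (-1) b ≤ fV 0 1 ((aboxDd A : ℤ) + 2) y - 1 := hs3
          omega
    | @icomp_dia b y h1 =>
        obtain ⟨⟨hwo, hwf, hbt, hdto, hclsF, hclsE⟩, hs1, hs3⟩ := h1
        refine ⟨⟨WFo_of_diaS hwo, hwf, hdto (DTo_diaS b)⟩, ?_, ?_⟩
        · show oV 1 0 (-(aboxBd A : ℤ) - 1) b + 0 ≤ fV 1 0 1 y
          have : oV 1 0 (-(aboxBd A : ℤ) - 1) (ObName.diaS b) ≤ fV 1 0 1 y := hs1
          rw [oV_diaS] at this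
          omega
        · show oV 0 1 (-1) b + 1 ≤ fV 0 1 ((aboxDd A : ℤ) + 2) y
          have : oV 0 1 (-1) (ObName.diaS b) ≤ fV 0 1 ((aboxDd A : ℤ) + 2) y := hs3
          rw [oV_diaS] at this
          omega
    | @icomp_bdia b y h1 =>
        obtain ⟨⟨hwo, hwf, hbt, hdto, hclsF, hclsE⟩, hs1, hs3⟩ := h1
        refine ⟨⟨NDia_WFo hwo, hwf, hwo⟩, ?_, ?_⟩
        · show oV 1 0 (-(aboxBd A : ℤ) - 1) b + 1 ≤ fV 1 0 1 y
          exact hs1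
        · show oV 0 1 (-1) b + 0 ≤ fV 0 1 ((aboxDd A : ℤ) + 2) y
          exact hs3
    | @neg_b b C h1 =>
        rcases h1 with hA | ⟨b', C', hEq, _⟩ | ⟨y', C', hEq, _⟩
        · exact Or.inr (Or.inl ⟨b, C, rfl, hA⟩)
        · cases hEq
        · cases hEq
    | @neg_x y C h1 =>
        rcases h1 with hA | ⟨b', C', hEq, _⟩ | ⟨y', C', hEq, _⟩
        · exact Or.inr (Or.inr ⟨y, C, rfl, hA⟩)
        · cases hEq
        · cases hEq
    | @app_x b C h1 =>
        obtain ⟨⟨hwo, hwf, hbt, hdto, hclsF, hclsE⟩, hs1, hs3⟩ := h1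
        obtain ⟨h1', h2', h3'⟩ := hclsF C rfl
        refine ⟨⟨hwo, hwf, h1', h2', h3'⟩, hs1, hs3⟩
    | @app_a y C h1 =>
        obtain ⟨⟨hwo, hwf, hbt, hdto, hclsF, hclsE⟩, hs1, hs3⟩ := h1
        obtain ⟨h1', h2'⟩ := hclsE C rfl
        refine ⟨⟨hwf, hwo, h1', h2', ?_⟩, hs1, hs3⟩
        rintro F rfl
        exact (hclsF F rfl).2.2 C rfl
    | @extra t t' hE _ => exact hE.elim

/-! ### Completion machinery -/

lemma deriv_mono {E : Term → Term → Prop} {A S S' : Set Term} (hS : S ⊆ S')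
    {t : Term} (h : Deriv E A S t) : Deriv E A S' t := by
  cases h with
  | create_a h => exact .create_a h
  | create_x h => exact .create_x h
  | basic h1 h2 => exact .basic (hS h1) (hS h2)
  | andA_l h => exact .andA_l (hS h)
  | andA_r h => exact .andA_r (hS h)
  | orX_l h => exact .orX_l (hS h)
  | orX_r h => exact .orX_r (hS h)
  | boxR h1 h2 => exact .boxR (hS h1) (hS h2)
  | diaR h1 h2 => exact .diaR (hS h1) (hS h2)
  | andA_inv h1 h2 h3 => exact .andA_inv (hS h1) (hS h2) h3
  | orX_inv h1 h2 h3 => exact .orX_inv (hS h1) (hS h2) h3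
  | adj_box_l h => exact .adj_box_l (hS h)
  | adj_box_r h => exact .adj_box_r (hS h)
  | adj_dia_l h => exact .adj_dia_l (hS h)
  | adj_dia_r h => exact .adj_dia_r (hS h)
  | icomp_box h => exact .icomp_box (hS h)
  | icomp_bbox h => exact .icomp_bbox (hS h)
  | icomp_dia h => exact .icomp_dia (hS h)
  | icomp_bdia h => exact .icomp_bdia (hS h)
  | neg_b h => exact .neg_b (hS h)
  | neg_x h => exact .neg_x (hS h)
  | app_x h => exact .app_x (hS h)
  | app_a h => exact .app_a (hS h)
  | extra hE h => exact .extra hE (hS h)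

lemma compl_subset {E : Term → Term → Prop} {A S : Set Term}
    (hS : RuleClosed E A S) : Compl E A ⊆ S :=
  fun _ ht => ht S hS

lemma compl_ruleClosed (E : Term → Term → Prop) (A : Set Term) :
    RuleClosed E A (Compl E A) := by
  constructor
  · intro t ht S hS
    exact hS.1 ht
  · intro t hd S hS
    exact hS.2 t (deriv_mono (compl_subset hS) hd)

/-! ### Size bounds -/

lemma card_subs_le : ∀ C : Cpt, (Cpt.subs C).card ≤ C.csize := by
  intro C
  induction C with
  | atom n => simp [Cpt.subs, Cpt.csize]
  | meet C₁ C₂ ih₁ ih₂ =>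
      calc (Cpt.subs (Cpt.meet C₁ C₂)).card
          ≤ (Cpt.subs C₁ ∪ Cpt.subs C₂).card + 1 := Finset.card_insert_le _ _
        _ ≤ ((Cpt.subs C₁).card + (Cpt.subs C₂).card) + 1 := by
            exact Nat.add_le_add_right (Finset.card_union_le _ _) 1
        _ ≤ (Cpt.meet C₁ C₂).csize := by
            simp only [Cpt.csize]; omega
  | join C₁ C₂ ih₁ ih₂ =>
      calc (Cpt.subs (Cpt.join C₁ C₂)).card
          ≤ (Cpt.subs C₁ ∪ Cpt.subs C₂).card + 1 := Finset.card_insert_le _ _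
        _ ≤ ((Cpt.subs C₁).card + (Cpt.subs C₂).card) + 1 := by
            exact Nat.add_le_add_right (Finset.card_union_le _ _) 1
        _ ≤ (Cpt.join C₁ C₂).csize := by
            simp only [Cpt.csize]; omega
  | box C ih =>
      calc (Cpt.subs (Cpt.box C)).card ≤ (Cpt.subs C).card + 1 :=
            Finset.card_insert_le _ _
        _ ≤ (Cpt.box C).csize := by simp only [Cpt.csize]; omega
  | dia C ih =>
      calc (Cpt.subs (Cpt.dia C)).card ≤ (Cpt.subs C).card + 1 :=
            Finset.card_insert_le _ _
        _ ≤ (Cpt.dia C).csize := by simp only [Cpt.csize]; omega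

lemma csize_pos : ∀ C : Cpt, 1 ≤ C.csize := by
  intro C; cases C <;> simp [Cpt.csize] <;> omega

lemma csize_mono_subs : ∀ {C D : Cpt}, D ∈ C.subs → D.csize ≤ C.csize := by
  intro C
  induction C with
  | atom n =>
      intro D hD; simp [Cpt.subs] at hD; subst hD; exact le_refl _
  | meet C₁ C₂ ih₁ ih₂ =>
      intro D hD
      simp only [Cpt.subs, Finset.mem_insert, Finset.mem_union] at hD
      rcases hD with h | h | h
      · subst h; exact le_refl _
      · have := ih₁ h; simp only [Cpt.csize]; omega
      · have := ih₂ h; simp only [Cpt.csize]; omega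
  | join C₁ C₂ ih₁ ih₂ =>
      intro D hD
      simp only [Cpt.subs, Finset.mem_insert, Finset.mem_union] at hD
      rcases hD with h | h | h
      · subst h; exact le_refl _
      · have := ih₁ h; simp only [Cpt.csize]; omega
      · have := ih₂ h; simp only [Cpt.csize]; omega
  | box C ih =>
      intro D hD
      simp only [Cpt.subs, Finset.mem_insert] at hD
      rcases hD with h | h
      · subst h; exact le_refl _
      · have := ih h; simp only [Cpt.csize]; omega
  | dia C ih =>
      intro D hD
      simp only [Cpt.subs, Finset.mem_insert] at hD
      rcases hD with h | h
      · subst h; exact le_refl _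
      · have := ih h; simp only [Cpt.csize]; omega

lemma tsize_pos : ∀ t : Term, 1 ≤ t.tsize := by
  intro t; cases t <;> simp [Term.tsize] <;> omega

lemma tsize_le_aboxSize {A : Finset Term} {t : Term} (ht : t ∈ A) :
    t.tsize ≤ aboxSize A :=
  Finset.single_le_sum (fun t _ => Nat.zero_le t.tsize) ht

lemma csize_le_aboxSize {A : Finset Term} {C : Cpt} (h : C ∈ aboxCpts A) :
    C.csize ≤ aboxSize A := by
  rw [aboxCpts, Finset.mem_biUnion] at h
  obtain ⟨t, ht, hCt⟩ := h
  have h2 : t.tsize ≤ aboxSize A := tsize_le_aboxSize ht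
  have h1 : C.csize ≤ t.tsize := by
    cases t with
    | pos p =>
        cases p <;> simp [Term.cpts] at hCt <;>
          · have := csize_mono_subs hCt
            simp [Term.tsize, PTerm.psize]
            omega
    | neg p =>
        cases p <;> simp [Term.cpts] at hCt <;>
          · have := csize_mono_subs hCt
            simp [Term.tsize, PTerm.psize]
            omega
  omega

lemma bd_le_csize : ∀ C : Cpt, C.bd ≤ C.csize := by
  intro C
  induction C with
  | atom n => simp [Cpt.bd, Cpt.csize]
  | meet C₁ C₂ ih₁ ih₂ => simp only [Cpt.bd, Cpt.csize]; omega
  | join C₁ C₂ ih₁ ih₂ => simp only [Cpt.bd, Cpt.csize]; omega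
  | box C ih => simp only [Cpt.bd, Cpt.csize]; omega
  | dia C ih => simp only [Cpt.bd, Cpt.csize]; omega

lemma dd_le_csize : ∀ C : Cpt, C.dd ≤ C.csize := by
  intro C
  induction C with
  | atom n => simp [Cpt.dd, Cpt.csize]
  | meet C₁ C₂ ih₁ ih₂ => simp only [Cpt.dd, Cpt.csize]; omega
  | join C₁ C₂ ih₁ ih₂ => simp only [Cpt.dd, Cpt.csize]; omega
  | box C ih => simp only [Cpt.dd, Cpt.csize]; omega
  | dia C ih => simp only [Cpt.dd, Cpt.csize]; omega

lemma aboxBd_le (A : Finset Term) : aboxBd A ≤ aboxSize A := by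
  apply Finset.sup_le
  intro C hC
  exact le_trans (bd_le_csize C) (csize_le_aboxSize hC)

lemma aboxDd_le (A : Finset Term) : aboxDd A ≤ aboxSize A := by
  apply Finset.sup_le
  intro C hC
  exact le_trans (dd_le_csize C) (csize_le_aboxSize hC)

/-! ### Value identities and structural bounds -/

lemma hN_boxpow (u v : ℤ) : ∀ (m : ℕ) (C : Cpt),
    hN u v (boxpow m C) = hN u v C - m * u := by
  intro m
  induction m with
  | zero => intro C; simp [boxpow]
  | succ m ih => intro C; simp [boxpow, hN, ih]; ring

lemma hN_diapow (u v : ℤ) : ∀ (m : ℕ) (C : Cpt),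
    hN u v (diapow m C) = hN u v C + m * v := by
  intro m
  induction m with
  | zero => intro C; simp [diapow]
  | succ m ih => intro C; simp [diapow, hN, ih]; ring

lemma oV_obDia (u v β : ℤ) : ∀ (i : ℕ) (b : ObName),
    oV u v β (obDia i b) = oV u v β b + i * v := by
  intro i
  induction i with
  | zero => intro b; simp [obDia]
  | succ i ih => intro b; simp [obDia, oV, ih]; ring

lemma oV_obBdia (u v β : ℤ) : ∀ (j : ℕ) (b : ObName),
    oV u v β (obBdia j b) = oV u v β b + j * u := by
  intro j
  induction j with
  | zero => intro b; simp [obBdia]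
  | succ j ih => intro b; simp [obBdia, oV, ih]; ring

lemma fV_ftBox (u v φ : ℤ) : ∀ (p : ℕ) (y : FtName),
    fV u v φ (ftBox p y) = fV u v φ y - p * u := by
  intro p
  induction p with
  | zero => intro y; simp [ftBox]
  | succ p ih => intro y; simp [ftBox, fV, ih]; ring

lemma fV_ftBbox (u v φ : ℤ) : ∀ (q : ℕ) (y : FtName),
    fV u v φ (ftBbox q y) = fV u v φ y - q * v := by
  intro q
  induction q with
  | zero => intro y; simp [ftBbox]
  | succ q ih => intro y; simp [ftBbox, fV, ih]; ring

lemma fV1_le (A : Finset Term) : ∀ y : FtName, fV 1 0 1 y ≤ 1 := by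
  intro y
  induction y with
  | base n => simp [fV]
  | cls F => have := hN1_le_zero F; simp [fV]; omega
  | box y ih => simp [fV]; omega
  | bbox y ih => simp [fV]; omega

lemma oV3_ge (A : Finset Term) : ∀ b : ObName, -1 ≤ oV 0 1 (-1) b := by
  intro b
  induction b with
  | base n => simp [oV]
  | cls E => have := hN3_nonneg E; simp [oV]; omega
  | dia b ih => simp [oV]; omega
  | bdia b ih => simp [oV]; omega

lemma oV1_ge {A : Finset Term} : ∀ {b : ObName}, WFo A b →
    -(aboxBd A : ℤ) - 1 ≤ oV 1 0 (-(aboxBd A : ℤ) - 1) b := by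
  intro b
  induction b with
  | base n => intro _; simp [oV]
  | cls E =>
      intro h
      obtain ⟨m, C₀, h₀, rfl⟩ := h
      have h1 : hN 1 0 (diapow m C₀) = hN 1 0 C₀ := by
        rw [hN_diapow]; ring
      have h2 := hN1_ge C₀
      have h3 : C₀.bd ≤ aboxBd A := bd_le_aboxBd h₀
      show -(aboxBd A : ℤ) - 1 ≤ hN 1 0 (diapow m C₀)
      omega
  | dia b ih => intro h; have := ih h; simp only [oV]; omega
  | bdia b ih =>
      intro h
      have := ih (NDia_WFo h)
      simp only [oV]; omega

lemma fV3_le {A : Finset Term} : ∀ {y : FtName}, WFf A y →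
    fV 0 1 ((aboxDd A : ℤ) + 2) y ≤ (aboxDd A : ℤ) + 2 := by
  intro y
  induction y with
  | base n => intro _; simp [fV]
  | cls F =>
      intro h
      obtain ⟨m, C₀, h₀, rfl⟩ := h
      have h1 : hN 0 1 (boxpow m C₀) = hN 0 1 C₀ := by
        rw [hN_boxpow]; ring
      have h2 := hN3_le C₀
      have h3 : C₀.dd ≤ aboxDd A := dd_le_aboxDd h₀
      show hN 0 1 (boxpow m C₀) ≤ (aboxDd A : ℤ) + 2
      omega
  | box y ih => intro h; have := ih h; simp only [fV]; omega
  | bbox y ih =>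
      intro h
      have := ih (NBox_WFf h)
      simp only [fV]; omega

/-! ### Decompositions -/

lemma NDia_decomp {A : Finset Term} : ∀ {b : ObName}, NDia A b →
    ∃ j c, b = obBdia j c ∧
      ((∃ n, c = ObName.base n ∧ ObOccurs (ObName.base n) ↑A) ∨
       (∃ m C₀, C₀ ∈ aboxCpts A ∧ c = ObName.cls (diapow m C₀))) := by
  intro b
  induction b with
  | base n => intro h; exact ⟨0, _, rfl, Or.inl ⟨n, rfl, h⟩⟩
  | cls E => intro h; exact ⟨0, _, rfl, Or.inr ⟨0, E, h.1, rfl⟩⟩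
  | dia b ih => intro h; exact h.elim
  | bdia b ih =>
      intro h
      obtain ⟨j, c, rfl, hc⟩ := ih h
      exact ⟨j + 1, c, rfl, hc⟩

lemma WFo_decomp {A : Finset Term} : ∀ {b : ObName}, WFo A b →
    ∃ i j c, b = obDia i (obBdia j c) ∧
      ((∃ n, c = ObName.base n ∧ ObOccurs (ObName.base n) ↑A) ∨
       (∃ m C₀, C₀ ∈ aboxCpts A ∧ c = ObName.cls (diapow m C₀))) := by
  intro b
  induction b with
  | base n => intro h; exact ⟨0, 0, _, rfl, Or.inl ⟨n, rfl, h⟩⟩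
  | cls E =>
      intro h
      obtain ⟨m, C₀, h₀, rfl⟩ := h
      exact ⟨0, 0, _, rfl, Or.inr ⟨m, C₀, h₀, rfl⟩⟩
  | dia b ih =>
      intro h
      obtain ⟨i, j, c, rfl, hc⟩ := ih h
      exact ⟨i + 1, j, c, rfl, hc⟩
  | bdia b ih =>
      intro h
      obtain ⟨j, c, rfl, hc⟩ := NDia_decomp h
      exact ⟨0, j + 1, c, rfl, hc⟩

lemma NBox_decomp {A : Finset Term} : ∀ {y : FtName}, NBox A y →
    ∃ q c, y = ftBbox q c ∧
      ((∃ n, c = FtName.base n ∧ FtOccurs (FtName.base n) ↑A) ∨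
       (∃ m C₀, C₀ ∈ aboxCpts A ∧ c = FtName.cls (boxpow m C₀))) := by
  intro y
  induction y with
  | base n => intro h; exact ⟨0, _, rfl, Or.inl ⟨n, rfl, h⟩⟩
  | cls F => intro h; exact ⟨0, _, rfl, Or.inr ⟨0, F, h.1, rfl⟩⟩
  | box y ih => intro h; exact h.elim
  | bbox y ih =>
      intro h
      obtain ⟨q, c, rfl, hc⟩ := ih h
      exact ⟨q + 1, c, rfl, hc⟩

lemma WFf_decomp {A : Finset Term} : ∀ {y : FtName}, WFf A y →
    ∃ p q c, y = ftBox p (ftBbox q c) ∧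
      ((∃ n, c = FtName.base n ∧ FtOccurs (FtName.base n) ↑A) ∨
       (∃ m C₀, C₀ ∈ aboxCpts A ∧ c = FtName.cls (boxpow m C₀))) := by
  intro y
  induction y with
  | base n => intro h; exact ⟨0, 0, _, rfl, Or.inl ⟨n, rfl, h⟩⟩
  | cls F =>
      intro h
      obtain ⟨m, C₀, h₀, rfl⟩ := h
      exact ⟨0, 0, _, rfl, Or.inr ⟨m, C₀, h₀, rfl⟩⟩
  | box y ih =>
      intro h
      obtain ⟨p, q, c, rfl, hc⟩ := ih h
      exact ⟨p + 1, q, c, rfl, hc⟩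
  | bbox y ih =>
      intro h
      obtain ⟨q, c, rfl, hc⟩ := NBox_decomp h
      exact ⟨0, q + 1, c, rfl, hc⟩

/-! ### The polynomial universe -/

/-- Uniform parameter bound. -/
def bP (A : Finset Term) : ℕ := aboxSize A + 3

def baseObs (A : Finset Term) : Finset ObName :=
  A.biUnion fun t => t.objs.toFinset

def baseFts (A : Finset Term) : Finset FtName :=
  A.biUnion fun t => t.feats.toFinset

def coreObs (A : Finset Term) : Finset ObName :=
  baseObs A ∪
    ((Finset.range (bP A + 1) ×ˢ aboxCpts A).image fun q =>
      ObName.cls (diapow q.1 q.2))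

def coreFts (A : Finset Term) : Finset FtName :=
  baseFts A ∪
    ((Finset.range (bP A + 1) ×ˢ aboxCpts A).image fun q =>
      FtName.cls (boxpow q.1 q.2))

def obU (A : Finset Term) : Finset ObName :=
  (((Finset.range (bP A + 1)) ×ˢ (Finset.range (bP A + 1))) ×ˢ coreObs A).image
    fun q => obDia q.1.1 (obBdia q.1.2 q.2)

def ftU (A : Finset Term) : Finset FtName :=
  (((Finset.range (bP A + 1)) ×ˢ (Finset.range (bP A + 1))) ×ˢ coreFts A).image
    fun q => ftBox q.1.1 (ftBbox q.1.2 q.2)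

def cptFU (A : Finset Term) : Finset Cpt :=
  (Finset.range (bP A + 1) ×ˢ aboxCpts A).image fun q => boxpow q.1 q.2

def cptDU (A : Finset Term) : Finset Cpt :=
  (Finset.range (bP A + 1) ×ˢ aboxCpts A).image fun q => diapow q.1 q.2

def posU (A : Finset Term) : Finset Term :=
  ((((obU A ×ˢ ftU A).image fun q => Term.pos (.rI q.1 q.2)) ∪
    ((obU A ×ˢ ftU A).image fun q => Term.pos (.rbox q.1 q.2))) ∪
   ((obU A ×ˢ ftU A).image fun q => Term.pos (.rdia q.2 q.1))) ∪
  (((obU A ×ˢ cptFU A).image fun q => Term.pos (.mem q.1 q.2)) ∪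
   ((ftU A ×ˢ cptDU A).image fun q => Term.pos (.fmem q.1 q.2)))

def negRepl : Term → Term
  | .neg (.mem b C) => .neg (.rI b (.cls C))
  | .neg (.fmem y C) => .neg (.rI (.cls C) y)
  | t => t

def negU (A : Finset Term) : Finset Term := A ∪ A.image negRepl

def tU (A : Finset Term) : Finset Term := posU A ∪ negU A

lemma mem_baseObs {A : Finset Term} {b : ObName} (h : ObOccurs b ↑A) :
    b ∈ baseObs A := by
  obtain ⟨t, ht, hb⟩ := h
  exact Finset.mem_biUnion.mpr ⟨t, ht, List.mem_toFinset.mpr hb⟩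

lemma mem_baseFts {A : Finset Term} {y : FtName} (h : FtOccurs y ↑A) :
    y ∈ baseFts A := by
  obtain ⟨t, ht, hy⟩ := h
  exact Finset.mem_biUnion.mpr ⟨t, ht, List.mem_toFinset.mpr hy⟩

lemma bd_le_bP (A : Finset Term) : aboxBd A + 3 ≤ bP A := by
  have := aboxBd_le A; unfold bP; omega

lemma dd_le_bP (A : Finset Term) : aboxDd A + 3 ≤ bP A := by
  have := aboxDd_le A; unfold bP; omega

lemma ob_mem_obU {A : Finset Term} {b : ObName} (hw : WFo A b)
    (h1 : oV 1 0 (-(aboxBd A : ℤ) - 1) b ≤ 1)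
    (h3 : oV 0 1 (-1) b ≤ (aboxDd A : ℤ) + 2) : b ∈ obU A := by
  obtain ⟨i, j, c, rfl, hc⟩ := WFo_decomp hw
  set β1 : ℤ := -(aboxBd A : ℤ) - 1 with hβ1
  have e1 : oV 1 0 β1 (obDia i (obBdia j c)) = oV 1 0 β1 c + j := by
    rw [oV_obDia, oV_obBdia]; ring
  have e3 : oV 0 1 (-1) (obDia i (obBdia j c)) = oV 0 1 (-1) c + i := by
    rw [oV_obDia, oV_obBdia]; ring
  have hBdP := bd_le_bP A
  have hDdP := dd_le_bP A
  have key : c ∈ coreObs A ∧ j ≤ bP A ∧ i ≤ bP A := by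
    rcases hc with ⟨m, rfl, hocc⟩ | ⟨m, C₀, h₀, rfl⟩
    · refine ⟨Finset.mem_union_left _ (mem_baseObs hocc), ?_, ?_⟩
      · have : oV 1 0 β1 (ObName.base m) = β1 := rfl
        rw [e1, this] at h1
        omega
      · have : oV 0 1 (-1) (ObName.base m) = (-1 : ℤ) := rfl
        rw [e3, this] at h3
        omega
    · have hc1 : oV 1 0 β1 (ObName.cls (diapow m C₀)) = hN 1 0 C₀ := by
        show hN 1 0 (diapow m C₀) = hN 1 0 C₀
        rw [hN_diapow]; ring
      have hc3 : oV 0 1 (-1) (ObName.cls (diapow m C₀)) = hN 0 1 C₀ + m := by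
        show hN 0 1 (diapow m C₀) = hN 0 1 C₀ + m
        rw [hN_diapow]; ring
      have hb1 := hN1_ge C₀
      have hb2 := hN1_le_zero C₀
      have hb3 := hN3_nonneg C₀
      have hbd : C₀.bd ≤ aboxBd A := bd_le_aboxBd h₀
      rw [e1, hc1] at h1
      rw [e3, hc3] at h3
      have hm : m ≤ bP A := by omega
      refine ⟨Finset.mem_union_right _ ?_, by omega, by omega⟩
      exact Finset.mem_image.mpr ⟨⟨m, C₀⟩,
        Finset.mem_product.mpr ⟨Finset.mem_range.mpr (show m < bP A + 1 by omega), h₀⟩, rfl⟩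
  obtain ⟨hcore, hj, hi⟩ := key
  refine Finset.mem_image.mpr ⟨⟨⟨i, j⟩, c⟩, ?_, rfl⟩
  refine Finset.mem_product.mpr ⟨Finset.mem_product.mpr ⟨?_, ?_⟩, hcore⟩
  · exact Finset.mem_range.mpr (show i < bP A + 1 by omega)
  · exact Finset.mem_range.mpr (show j < bP A + 1 by omega)

lemma ft_mem_ftU {A : Finset Term} {y : FtName} (hw : WFf A y)
    (h1 : -(aboxBd A : ℤ) - 1 ≤ fV 1 0 1 y)
    (h3 : -1 ≤ fV 0 1 ((aboxDd A : ℤ) + 2) y) : y ∈ ftU A := by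
  obtain ⟨p, q, c, rfl, hc⟩ := WFf_decomp hw
  set φ3 : ℤ := (aboxDd A : ℤ) + 2 with hφ3
  have e1 : fV 1 0 1 (ftBox p (ftBbox q c)) = fV 1 0 1 c - p := by
    rw [fV_ftBox, fV_ftBbox]; ring
  have e3 : fV 0 1 φ3 (ftBox p (ftBbox q c)) = fV 0 1 φ3 c - q := by
    rw [fV_ftBox, fV_ftBbox]; ring
  have hBdP := bd_le_bP A
  have hDdP := dd_le_bP A
  have key : c ∈ coreFts A ∧ p ≤ bP A ∧ q ≤ bP A := by
    rcases hc with ⟨m, rfl, hocc⟩ | ⟨m, C₀, h₀, rfl⟩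
    · refine ⟨Finset.mem_union_left _ (mem_baseFts hocc), ?_, ?_⟩
      · have : fV 1 0 1 (FtName.base m) = 1 := rfl
        rw [e1, this] at h1
        omega
      · have : fV 0 1 φ3 (FtName.base m) = φ3 := rfl
        rw [e3, this] at h3
        omega
    · have hc1 : fV 1 0 1 (FtName.cls (boxpow m C₀)) = hN 1 0 C₀ - m := by
        show hN 1 0 (boxpow m C₀) = hN 1 0 C₀ - m
        rw [hN_boxpow]; ring
      have hc3 : fV 0 1 φ3 (FtName.cls (boxpow m C₀)) = hN 0 1 C₀ := by
        show hN 0 1 (boxpow m C₀) = hN 0 1 C₀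
        rw [hN_boxpow]; ring
      have hb1 := hN1_ge C₀
      have hb2 := hN1_le_zero C₀
      have hb3 := hN3_nonneg C₀
      have hb4 := hN3_le C₀
      have hbd : C₀.bd ≤ aboxBd A := bd_le_aboxBd h₀
      have hdd : C₀.dd ≤ aboxDd A := dd_le_aboxDd h₀
      rw [e1, hc1] at h1
      rw [e3, hc3] at h3
      refine ⟨Finset.mem_union_right _ ?_, by omega, by omega⟩
      exact Finset.mem_image.mpr ⟨⟨m, C₀⟩,
        Finset.mem_product.mpr ⟨Finset.mem_range.mpr (show m < bP A + 1 by omega), h₀⟩, rfl⟩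
  obtain ⟨hcore, hp, hq⟩ := key
  refine Finset.mem_image.mpr ⟨⟨⟨p, q⟩, c⟩, ?_, rfl⟩
  refine Finset.mem_product.mpr ⟨Finset.mem_product.mpr ⟨?_, ?_⟩, hcore⟩
  · exact Finset.mem_range.mpr (show p < bP A + 1 by omega)
  · exact Finset.mem_range.mpr (show q < bP A + 1 by omega)

lemma cptF_mem {A : Finset Term} {C : Cpt} (hf : famF A C)
    (h1 : -(aboxBd A : ℤ) - 1 ≤ hN 1 0 C) : C ∈ cptFU A := by
  obtain ⟨m, C₀, h₀, rfl⟩ := hf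
  have e : hN 1 0 (boxpow m C₀) = hN 1 0 C₀ - m := by rw [hN_boxpow]; ring
  have hb2 := hN1_le_zero C₀
  have hBdP := bd_le_bP A
  rw [e] at h1
  exact Finset.mem_image.mpr ⟨⟨m, C₀⟩,
    Finset.mem_product.mpr ⟨Finset.mem_range.mpr (show m < bP A + 1 by omega), h₀⟩, rfl⟩

lemma cptD_mem {A : Finset Term} {C : Cpt} (hd : famD A C)
    (h3 : hN 0 1 C ≤ (aboxDd A : ℤ) + 2) : C ∈ cptDU A := by
  obtain ⟨m, C₀, h₀, rfl⟩ := hd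
  have e : hN 0 1 (diapow m C₀) = hN 0 1 C₀ + m := by rw [hN_diapow]; ring
  have hb3 := hN3_nonneg C₀
  have hDdP := dd_le_bP A
  rw [e] at h3
  exact Finset.mem_image.mpr ⟨⟨m, C₀⟩,
    Finset.mem_product.mpr ⟨Finset.mem_range.mpr (show m < bP A + 1 by omega), h₀⟩, rfl⟩

lemma inv_mem_tU {A : Finset Term} {t : Term} (h : Inv A t) : t ∈ tU A := by
  cases t with
  | neg p =>
      rcases h with hA | ⟨b, C, rfl, hA⟩ | ⟨y, C, rfl, hA⟩
      · exact Finset.mem_union_right _ (Finset.mem_union_left _ hA)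
      · refine Finset.mem_union_right _ (Finset.mem_union_right _ ?_)
        exact Finset.mem_image.mpr ⟨Term.neg (.mem b C), hA, rfl⟩
      · refine Finset.mem_union_right _ (Finset.mem_union_right _ ?_)
        exact Finset.mem_image.mpr ⟨Term.neg (.fmem y C), hA, rfl⟩
  | pos p =>
      apply Finset.mem_union_left
      cases p with
      | rI b y =>
          obtain ⟨⟨hwo, hwf, _, _, _, _⟩, hs1, hs3⟩ := h
          have hb : b ∈ obU A := by
            refine ob_mem_obU hwo ?_ ?_
            · exact le_trans hs1 (fV1_le A y)
            · exact le_trans hs3 (fV3_le hwf)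
          have hy : y ∈ ftU A := by
            refine ft_mem_ftU hwf ?_ ?_
            · exact le_trans (oV1_ge hwo) hs1
            · exact le_trans (oV3_ge A b) hs3
          refine Finset.mem_union_left _ (Finset.mem_union_left _
            (Finset.mem_union_left _ ?_))
          exact Finset.mem_image.mpr ⟨⟨b, y⟩, Finset.mem_product.mpr ⟨hb, hy⟩, rfl⟩
      | rbox b y =>
          obtain ⟨⟨hwo, hwf, _⟩, hs1, hs3⟩ := h
          have hs1' : oV 1 0 (-(aboxBd A : ℤ) - 1) b + 1 ≤ fV 1 0 1 y := hs1
          have hs3' : oV 0 1 (-1) b + 0 ≤ fV 0 1 ((aboxDd A : ℤ) + 2) y := hs3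
          have hfup := fV1_le A y
          have hfup3 := fV3_le hwf
          have hlow := oV1_ge hwo
          have hlow3 := oV3_ge A b
          have hb : b ∈ obU A := ob_mem_obU hwo (by omega) (by omega)
          have hy : y ∈ ftU A := ft_mem_ftU hwf (by omega) (by omega)
          refine Finset.mem_union_left _ (Finset.mem_union_left _
            (Finset.mem_union_right _ ?_))
          exact Finset.mem_image.mpr ⟨⟨b, y⟩, Finset.mem_product.mpr ⟨hb, hy⟩, rfl⟩
      | rdia y b =>
          obtain ⟨⟨hwo, hwf, _⟩, hs1, hs3⟩ := h
          have hs1' : oV 1 0 (-(aboxBd A : ℤ) - 1) b + 0 ≤ fV 1 0 1 y := hs1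
          have hs3' : oV 0 1 (-1) b + 1 ≤ fV 0 1 ((aboxDd A : ℤ) + 2) y := hs3
          have hfup := fV1_le A y
          have hfup3 := fV3_le hwf
          have hlow := oV1_ge hwo
          have hlow3 := oV3_ge A b
          have hb : b ∈ obU A := ob_mem_obU hwo (by omega) (by omega)
          have hy : y ∈ ftU A := ft_mem_ftU hwf (by omega) (by omega)
          refine Finset.mem_union_left _ (Finset.mem_union_right _ ?_)
          exact Finset.mem_image.mpr ⟨⟨b, y⟩, Finset.mem_product.mpr ⟨hb, hy⟩, rfl⟩
      | mem b C =>
          obtain ⟨⟨hwo, hf, _, _, _⟩, hs1, hs3⟩ := h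
          have hs1' : oV 1 0 (-(aboxBd A : ℤ) - 1) b ≤ hN 1 0 C := hs1
          have hs3' : oV 0 1 (-1) b ≤ hN 0 1 C := hs3
          have hup1 := hN1_le_zero C
          have hup3 : hN 0 1 C ≤ (aboxDd A : ℤ) := by
            obtain ⟨m, C₀, h₀, rfl⟩ := hf
            have e : hN 0 1 (boxpow m C₀) = hN 0 1 C₀ := by
              rw [hN_boxpow]; ring
            have := hN3_le C₀
            have := dd_le_aboxDd h₀
            omega
          have hlow := oV1_ge hwo
          have hb : b ∈ obU A := ob_mem_obU hwo (by omega) (by omega)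
          have hC : C ∈ cptFU A := cptF_mem hf (by omega)
          refine Finset.mem_union_right _ (Finset.mem_union_left _ ?_)
          exact Finset.mem_image.mpr ⟨⟨b, C⟩, Finset.mem_product.mpr ⟨hb, hC⟩, rfl⟩
      | fmem y C =>
          obtain ⟨⟨hwf, hd, _, _, _⟩, hs1, hs3⟩ := h
          have hs1' : hN 1 0 C ≤ fV 1 0 1 y := hs1
          have hs3' : hN 0 1 C ≤ fV 0 1 ((aboxDd A : ℤ) + 2) y := hs3
          have hlow1 : -(aboxBd A : ℤ) ≤ hN 1 0 C := by
            obtain ⟨m, C₀, h₀, rfl⟩ := hd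
            have e : hN 1 0 (diapow m C₀) = hN 1 0 C₀ := by
              rw [hN_diapow]; ring
            have := hN1_ge C₀
            have := bd_le_aboxBd h₀
            omega
          have hlow3 := hN3_nonneg C
          have hfup3 := fV3_le hwf
          have hy : y ∈ ftU A := ft_mem_ftU hwf (by omega) (by omega)
          have hC : C ∈ cptDU A := cptD_mem hd (by omega)
          refine Finset.mem_union_right _ (Finset.mem_union_right _ ?_)
          exact Finset.mem_image.mpr ⟨⟨y, C⟩, Finset.mem_product.mpr ⟨hy, hC⟩, rfl⟩

/-! ### Cardinality bounds -/

lemma card_cpts_le (t : Term) : t.cpts.card ≤ t.tsize := by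
  cases t with
  | pos p =>
      cases p <;> simp only [Term.cpts, Term.tsize, PTerm.psize] <;>
        first
          | simp
          | · have := card_subs_le (by assumption)
              omega
          | · rename_i b C
              have := card_subs_le C
              omega
          | · rename_i y C
              have := card_subs_le C
              omega
  | neg p =>
      cases p <;> simp only [Term.cpts, Term.tsize, PTerm.psize] <;>
        first
          | simp
          | · rename_i b C
              have := card_subs_le C
              omega
          | · rename_i y C
              have := card_subs_le C
              omega

lemma card_aboxCpts_le (A : Finset Term) : (aboxCpts A).card ≤ aboxSize A := by
  calc (aboxCpts A).card ≤ ∑ t ∈ A, t.cpts.card := Finset.card_biUnion_le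
    _ ≤ ∑ t ∈ A, t.tsize := Finset.sum_le_sum fun t _ => card_cpts_le t
    _ = aboxSize A := rfl

lemma objs_len_le (t : Term) : t.objs.length ≤ 1 := by
  cases t with
  | pos p => cases p <;> simp [Term.objs, PTerm.objs]
  | neg p => cases p <;> simp [Term.objs, PTerm.objs]

lemma feats_len_le (t : Term) : t.feats.length ≤ 1 := by
  cases t with
  | pos p => cases p <;> simp [Term.feats, PTerm.feats]
  | neg p => cases p <;> simp [Term.feats, PTerm.feats]

lemma card_baseObs_le (A : Finset Term) : (baseObs A).card ≤ aboxSize A := by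
  calc (baseObs A).card ≤ ∑ t ∈ A, t.objs.toFinset.card := Finset.card_biUnion_le
    _ ≤ ∑ t ∈ A, t.tsize := by
        refine Finset.sum_le_sum fun t _ => ?_
        have h1 := t.objs.toFinset_card_le
        have h2 := objs_len_le t
        have h3 := tsize_pos t
        omega
    _ = aboxSize A := rfl

lemma card_baseFts_le (A : Finset Term) : (baseFts A).card ≤ aboxSize A := by
  calc (baseFts A).card ≤ ∑ t ∈ A, t.feats.toFinset.card := Finset.card_biUnion_le
    _ ≤ ∑ t ∈ A, t.tsize := by
        refine Finset.sum_le_sum fun t _ => ?_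
        have h1 := t.feats.toFinset_card_le
        have h2 := feats_len_le t
        have h3 := tsize_pos t
        omega
    _ = aboxSize A := rfl

lemma card_A_le (A : Finset Term) : A.card ≤ aboxSize A := by
  calc A.card = ∑ _t ∈ A, 1 := by simp
    _ ≤ ∑ t ∈ A, t.tsize := Finset.sum_le_sum fun t _ => tsize_pos t
    _ = aboxSize A := rfl

lemma card_tU_le (A : Finset Term) :
    (tU A).card ≤ 20000 * (aboxSize A + 1) ^ 8 := by
  set s : ℕ := aboxSize A + 1 with hs_def
  have hs : 1 ≤ s := by omega
  have hss : ∀ k l : ℕ, k ≤ l → s ^ k ≤ s ^ l := fun k l h =>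
    Nat.pow_le_pow_right hs h
  have hrange : (Finset.range (bP A + 1)).card ≤ 4 * s := by
    simp only [Finset.card_range, bP]
    omega
  have hcc : (aboxCpts A).card ≤ s := by
    have := card_aboxCpts_le A
    omega
  have hcore : (coreObs A).card ≤ 5 * s ^ 2 := by
    have h1 : (coreObs A).card ≤ (baseObs A).card +
        (((Finset.range (bP A + 1) ×ˢ aboxCpts A).image fun q =>
          ObName.cls (diapow q.1 q.2))).card := Finset.card_union_le _ _
    have h2 : (((Finset.range (bP A + 1) ×ˢ aboxCpts A).image fun q =>
        ObName.cls (diapow q.1 q.2))).card ≤ 4 * s * s := by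
      calc _ ≤ (Finset.range (bP A + 1) ×ˢ aboxCpts A).card :=
            Finset.card_image_le
        _ = (Finset.range (bP A + 1)).card * (aboxCpts A).card :=
            Finset.card_product _ _
        _ ≤ 4 * s * s := Nat.mul_le_mul hrange hcc
    have h3 := card_baseObs_le A
    have h4 : s ≤ s ^ 2 := by nlinarith
    nlinarith
  have hcoreF : (coreFts A).card ≤ 5 * s ^ 2 := by
    have h1 : (coreFts A).card ≤ (baseFts A).card +
        (((Finset.range (bP A + 1) ×ˢ aboxCpts A).image fun q =>
          FtName.cls (boxpow q.1 q.2))).card := Finset.card_union_le _ _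
    have h2 : (((Finset.range (bP A + 1) ×ˢ aboxCpts A).image fun q =>
        FtName.cls (boxpow q.1 q.2))).card ≤ 4 * s * s := by
      calc _ ≤ (Finset.range (bP A + 1) ×ˢ aboxCpts A).card :=
            Finset.card_image_le
        _ = (Finset.range (bP A + 1)).card * (aboxCpts A).card :=
            Finset.card_product _ _
        _ ≤ 4 * s * s := Nat.mul_le_mul hrange hcc
    have h3 := card_baseFts_le A
    have h4 : s ≤ s ^ 2 := by nlinarith
    nlinarith
  have hobU : (obU A).card ≤ 80 * s ^ 4 := by
    calc (obU A).card
        ≤ (((Finset.range (bP A + 1)) ×ˢ (Finset.range (bP A + 1))) ×ˢ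
            coreObs A).card := Finset.card_image_le
      _ = (Finset.range (bP A + 1)).card * (Finset.range (bP A + 1)).card *
            (coreObs A).card := by
          rw [Finset.card_product, Finset.card_product]
      _ ≤ (4 * s) * (4 * s) * (5 * s ^ 2) :=
          Nat.mul_le_mul (Nat.mul_le_mul hrange hrange) hcore
      _ = 80 * s ^ 4 := by ring
  have hftU : (ftU A).card ≤ 80 * s ^ 4 := by
    calc (ftU A).card
        ≤ (((Finset.range (bP A + 1)) ×ˢ (Finset.range (bP A + 1))) ×ˢ
            coreFts A).card := Finset.card_image_le
      _ = (Finset.range (bP A + 1)).card * (Finset.range (bP A + 1)).card *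
            (coreFts A).card := by
          rw [Finset.card_product, Finset.card_product]
      _ ≤ (4 * s) * (4 * s) * (5 * s ^ 2) :=
          Nat.mul_le_mul (Nat.mul_le_mul hrange hrange) hcoreF
      _ = 80 * s ^ 4 := by ring
  have hcptF : (cptFU A).card ≤ 4 * s ^ 2 := by
    calc (cptFU A).card ≤ (Finset.range (bP A + 1) ×ˢ aboxCpts A).card :=
          Finset.card_image_le
      _ = (Finset.range (bP A + 1)).card * (aboxCpts A).card :=
          Finset.card_product _ _
      _ ≤ (4 * s) * s := Nat.mul_le_mul hrange hcc
      _ = 4 * s ^ 2 := by ring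
  have hcptD : (cptDU A).card ≤ 4 * s ^ 2 := by
    calc (cptDU A).card ≤ (Finset.range (bP A + 1) ×ˢ aboxCpts A).card :=
          Finset.card_image_le
      _ = (Finset.range (bP A + 1)).card * (aboxCpts A).card :=
          Finset.card_product _ _
      _ ≤ (4 * s) * s := Nat.mul_le_mul hrange hcc
      _ = 4 * s ^ 2 := by ring
  have hOF : ∀ f : ObName × FtName → Term,
      ((obU A ×ˢ ftU A).image f).card ≤ 6400 * s ^ 8 := by
    intro f
    calc ((obU A ×ˢ ftU A).image f).card ≤ (obU A ×ˢ ftU A).card :=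
          Finset.card_image_le
      _ = (obU A).card * (ftU A).card := Finset.card_product _ _
      _ ≤ (80 * s ^ 4) * (80 * s ^ 4) := Nat.mul_le_mul hobU hftU
      _ = 6400 * s ^ 8 := by ring
  have hmemU : (((obU A ×ˢ cptFU A).image fun q =>
      Term.pos (.mem q.1 q.2))).card ≤ 320 * s ^ 8 := by
    calc _ ≤ (obU A ×ˢ cptFU A).card := Finset.card_image_le
      _ = (obU A).card * (cptFU A).card := Finset.card_product _ _
      _ ≤ (80 * s ^ 4) * (4 * s ^ 2) := Nat.mul_le_mul hobU hcptF
      _ = 320 * s ^ 6 := by ring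
      _ ≤ 320 * s ^ 8 := Nat.mul_le_mul_left _ (hss 6 8 (by omega))
  have hfmemU : (((ftU A ×ˢ cptDU A).image fun q =>
      Term.pos (.fmem q.1 q.2))).card ≤ 320 * s ^ 8 := by
    calc _ ≤ (ftU A ×ˢ cptDU A).card := Finset.card_image_le
      _ = (ftU A).card * (cptDU A).card := Finset.card_product _ _
      _ ≤ (80 * s ^ 4) * (4 * s ^ 2) := Nat.mul_le_mul hftU hcptD
      _ = 320 * s ^ 6 := by ring
      _ ≤ 320 * s ^ 8 := Nat.mul_le_mul_left _ (hss 6 8 (by omega))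
  have hposU : (posU A).card ≤ 19840 * s ^ 8 := by
    have u1 := Finset.card_union_le
      ((((obU A ×ˢ ftU A).image fun q => Term.pos (.rI q.1 q.2)) ∪
        ((obU A ×ˢ ftU A).image fun q => Term.pos (.rbox q.1 q.2))) ∪
       ((obU A ×ˢ ftU A).image fun q => Term.pos (.rdia q.2 q.1)))
      (((obU A ×ˢ cptFU A).image fun q => Term.pos (.mem q.1 q.2)) ∪
       ((ftU A ×ˢ cptDU A).image fun q => Term.pos (.fmem q.1 q.2)))
    have u2 := Finset.card_union_le
      (((obU A ×ˢ ftU A).image fun q => Term.pos (.rI q.1 q.2)) ∪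
        ((obU A ×ˢ ftU A).image fun q => Term.pos (.rbox q.1 q.2)))
      ((obU A ×ˢ ftU A).image fun q => Term.pos (.rdia q.2 q.1))
    have u3 := Finset.card_union_le
      ((obU A ×ˢ ftU A).image fun q => Term.pos (.rI q.1 q.2))
      ((obU A ×ˢ ftU A).image fun q => Term.pos (.rbox q.1 q.2))
    have u4 := Finset.card_union_le
      ((obU A ×ˢ cptFU A).image fun q => Term.pos (.mem q.1 q.2))
      ((ftU A ×ˢ cptDU A).image fun q => Term.pos (.fmem q.1 q.2))
    have h1 := hOF fun q => Term.pos (.rI q.1 q.2)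
    have h2 := hOF fun q => Term.pos (.rbox q.1 q.2)
    have h3 := hOF fun q => Term.pos (.rdia q.2 q.1)
    unfold posU
    omega
  have hnegU : (negU A).card ≤ 2 * s ^ 8 := by
    have u1 := Finset.card_union_le A (A.image negRepl)
    have u2 : (A.image negRepl).card ≤ A.card := Finset.card_image_le
    have u3 := card_A_le A
    have u4 : s ≤ s ^ 8 := by
      calc s = s ^ 1 := by ring
        _ ≤ s ^ 8 := hss 1 8 (by omega)
    unfold negU
    omega
  have := Finset.card_union_le (posU A) (negU A)
  unfold tU
  omega
/-- For any LE-ALC ABox `A`, the tableaux algorithm applied to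
`A` terminates, and the number of expansion-rule applications (hence the
running time) is polynomial in the size of `A`: there is a uniform polynomial
bound on the length of every sequence of expansion steps starting from `A`. -/
theorem tableaux_termination_poly :
    ∃ c k : ℕ, ∀ A : Finset Term, ABoxWF ↑A →
      ∀ (n : ℕ) (B : ℕ → Set Term), B 0 = ↑A →
        (∀ i < n, Step noExt ↑A (B i) (B (i + 1))) →
        n ≤ c * (aboxSize A + 1) ^ k := by
  refine ⟨20000, 8, ?_⟩
  intro A hWF n B hB0 hstep
  have hRC := inv_closed A hWF
  have hcomplRC := compl_ruleClosed noExt (↑A : Set Term)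
  -- each stage is contained in the completion
  have hB : ∀ i, i ≤ n → B i ⊆ Compl noExt ↑A := by
    intro i
    induction i with
    | zero => intro _; rw [hB0]; exact hcomplRC.1
    | succ i ih =>
        intro hi
        obtain ⟨t, hdt, htB, hBi⟩ := hstep i (by omega)
        rw [hBi]
        intro x hx
        rcases Set.mem_insert_iff.mp hx with rfl | hx
        · exact hcomplRC.2 _ (deriv_mono (ih (by omega)) hdt)
        · exact ih (by omega) hx
  -- the stages are monotone
  have hmono : ∀ k, k ≤ n → ∀ i, i ≤ k → B i ⊆ B k := by
    intro k
    induction k with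
    | zero =>
        intro _ i hi
        have : i = 0 := by omega
        subst this
        exact subset_rfl
    | succ k ih =>
        intro hk i hi
        rcases Nat.lt_or_ge i (k + 1) with h | h
        · refine subset_trans (ih (by omega) i (by omega)) ?_
          obtain ⟨t, _, _, hBi⟩ := hstep k (by omega)
          rw [hBi]
          exact Set.subset_insert _ _
        · have : i = k + 1 := by omega
          subst this
          exact subset_rfl
  -- the added terms
  let d : Term := Term.pos (.rI (.base 0) (.base 0))
  let g : ℕ → Term := fun i => if h : i < n then (hstep i h).choose else d
  have hg : ∀ i, ∀ h : i < n, Deriv noExt ↑A (B i) (g i) ∧ g i ∉ B i ∧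
      B (i + 1) = insert (g i) (B i) := by
    intro i h
    have hgi : g i = (hstep i h).choose := by
      show (if h' : i < n then (hstep i h').choose else d) = _
      rw [dif_pos h]
    rw [hgi]
    exact (hstep i h).choose_spec
  have hgmem : ∀ i, i < n → g i ∈ tU A := by
    intro i hi
    refine inv_mem_tU (compl_subset hRC
      (hcomplRC.2 _ (deriv_mono (hB i (le_of_lt hi)) (hg i hi).1)))
  have hkey : ∀ i j, i < j → j < n → g i ≠ g j := by
    intro i j hij hjn hEq
    have h1 : g i ∈ B (i + 1) := by
      rw [(hg i (by omega)).2.2]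
      exact Set.mem_insert _ _
    have h2 : g i ∈ B j := hmono j (by omega) (i + 1) (by omega) h1
    have h3 : g j ∉ B j := (hg j hjn).2.1
    rw [hEq] at h2
    exact h3 h2
  have hinj : Set.InjOn g ↑(Finset.range n) := by
    intro i hi j hj hEq
    simp only [Finset.coe_range, Set.mem_Iio] at hi hj
    rcases lt_trichotomy i j with h | h | h
    · exact absurd hEq (hkey i j h hj)
    · exact h
    · exact absurd hEq.symm (hkey j i h hi)
  have hcard : (Finset.range n).card ≤ (tU A).card := by
    refine Finset.card_le_card_of_injOn g ?_ hinj
    intro i hi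
    exact hgmem i (Finset.mem_range.mp hi)
  rw [Finset.card_range] at hcard
  exact le_trans hcard (card_tU_le A)

end LEALC
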